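/- arXiv:2204.03411 — 14 statements merged into one kernel-verified Lean document; each statement's English description precedes it below -/
import Mathlib

section
/- Let 𝔐 be a finitely generated 𝔖-module with a φ-semilinear endomorphism φ_𝔐 : 𝔐 → 𝔐. Call an 𝔖-module with φ-semilinear endomorphism 'multiplicative' if the 𝔖-submodule generated by the image of its Frobenius endomorphism is the whole module (i.e. the linearized Frobenius 1⊗φ is surjective). Then there exists an 𝔖-submodule 𝔐^m ⊆ 𝔐 with φ_𝔐(𝔐^m) ⊆ 𝔐^m such that: (a) 𝔐^m with the restricted Frobenius is multiplicative (the 𝔖-span of φ_𝔐(𝔐^m) equals 𝔐^m); (b) the quotient 𝔐^n := 𝔐/𝔐^m, with the induced Frobenius, has no nonzero multiplicative submodule, i.e. no nonzero 𝔖-submodule Q ⊆ 𝔐^n whose 𝔖-span of the image of the induced Frobenius equals Q. Moreover, if 𝔐 is u-torsion free then both 𝔐^m and 𝔐^n are u-torsion free. -/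
/-!
The sum `𝔐^m` of all multiplicative submodules is again multiplicative, and the preimage in `𝔐`
of a multiplicative submodule of `𝔐 / 𝔐^m` is multiplicative, hence lies in `𝔐^m`.

For `u`-torsion freeness of `𝔐 / 𝔐^m` one shows that the `u`-saturation `⋃ₙ (𝔐^m : uⁿ)` is
multiplicative. The key input is that `φ_𝔐` is injective modulo `u` on a multiplicative
submodule `A`: the kernels of the iterates of the Frobenius of the noetherian module `𝔐 / u𝔐`
stabilize at some `n`, and as `φ` is onto modulo `u`, the image of `A` in `𝔐 / u𝔐` lies in the
image of the `n`-th iterate, which meets the kernel of the Frobenius trivially. Now if `u x ∈ A`,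
write `u x = φ_𝔐(z) + u y` with `z ∈ A` and `y` in the span of `φ_𝔐(A)`; then `z = u w`, and
`φ_𝔐(u w) = uᵖ φ_𝔐(w)` lets one cancel `u`, so `x` lies in the span of `φ_𝔐((A : u))`.
-/

open Submodule Pointwise

namespace LinearMap

variable {R M : Type*} [CommRing R] [AddCommGroup M] [Module R M] {σ : R →+* R}

theorem mem_iterate_comap (g : M →ₛₗ[σ] M) (S : Submodule R M) (n : ℕ) (x : M) :
    x ∈ (comap g)^[n] S ↔ g^[n] x ∈ S := by
  induction n generalizing x with
  | zero => rfl
  | succ n ih => rw [Function.iterate_succ_apply', mem_comap, ih, Function.iterate_succ_apply]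

theorem exists_iterate_ker_stabilizes [IsNoetherian R M] (g : M →ₛₗ[σ] M) :
    ∃ n, ∀ x, g^[n + 1] x = 0 → g^[n] x = 0 := by
  have hmono : Monotone fun n ↦ (comap g)^[n] ⊥ := monotone_nat_of_le_succ fun n x hx ↦ by
    rw [mem_iterate_comap, mem_bot] at hx ⊢
    rw [Function.iterate_succ_apply', hx, map_zero]
  obtain ⟨n, hn⟩ := monotone_stabilizes_iff_noetherian.mpr inferInstance ⟨_, hmono⟩
  refine ⟨n, fun x hx ↦ ?_⟩
  have hstab : (comap g)^[n] ⊥ = (comap g)^[n + 1] ⊥ := hn (n + 1) n.le_succ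
  have hx' : x ∈ (comap g)^[n + 1] ⊥ := by rwa [mem_iterate_comap, mem_bot]
  rwa [← hstab, mem_iterate_comap, mem_bot] at hx'

theorem exists_smul_iterate_eq (hσ : ∀ r, ∃ a, r - σ a ∈ Module.annihilator R M)
    (g : M →ₛₗ[σ] M) (n : ℕ) (r : R) (y : M) :
    ∃ y', r • g^[n] y = g^[n] y' := by
  induction n generalizing r with
  | zero => exact ⟨r • y, rfl⟩
  | succ n ih =>
    obtain ⟨a, ha⟩ := hσ r
    obtain ⟨y', hy'⟩ := ih a
    refine ⟨y', ?_⟩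
    have hr : r • g (g^[n] y) = σ a • g (g^[n] y) := by
      rw [← sub_eq_zero, ← sub_smul, Module.mem_annihilator.mp ha]
    rw [Function.iterate_succ_apply', Function.iterate_succ_apply', hr, ← map_smulₛₗ, hy']

theorem mem_range_iterate_of_mem_span (hσ : ∀ r, ∃ a, r - σ a ∈ Module.annihilator R M)
    (g : M →ₛₗ[σ] M) {n : ℕ} {z : M} (hz : z ∈ span R (Set.range g^[n])) : z ∈ Set.range g^[n] := by
  induction hz using span_induction with
  | mem z hz => exact hz
  | zero => exact ⟨0, iterate_map_zero g n⟩
  | add _ _ _ _ hy hz =>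
    obtain ⟨y, rfl⟩ := hy
    obtain ⟨z, rfl⟩ := hz
    exact ⟨y + z, iterate_map_add g n y z⟩
  | smul r _ _ hz =>
    obtain ⟨z, rfl⟩ := hz
    obtain ⟨y', hy'⟩ := exists_smul_iterate_eq hσ g n r z
    exact ⟨y', hy'.symm⟩

theorem le_span_range_iterate (g : M →ₛₗ[σ] M) {A : Submodule R M}
    (hA : A ≤ span R (g '' A)) (n : ℕ) : A ≤ span R (Set.range g^[n]) := by
  induction n with
  | zero => exact fun x _ ↦ subset_span ⟨x, rfl⟩
  | succ n ih =>
    refine hA.trans (span_le.mpr ?_)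
    rintro _ ⟨x, hx, rfl⟩
    have hgx : g x ∈ span R (g '' Set.range g^[n]) := image_span_subset_span g _ ⟨x, ih hx, rfl⟩
    refine span_mono ?_ hgx
    rintro _ ⟨_, ⟨y, rfl⟩, rfl⟩
    exact ⟨y, Function.iterate_succ_apply' g n y⟩

theorem eq_zero_of_mem_of_apply_eq_zero [IsNoetherian R M]
    (hσ : ∀ r, ∃ a, r - σ a ∈ Module.annihilator R M) (g : M →ₛₗ[σ] M) {A : Submodule R M}
    (hA : A ≤ span R (g '' A)) {z : M} (hz : z ∈ A) (hgz : g z = 0) : z = 0 := by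
  obtain ⟨n, hn⟩ := exists_iterate_ker_stabilizes g
  obtain ⟨w, rfl⟩ := mem_range_iterate_of_mem_span hσ g (le_span_range_iterate g hA n hz)
  exact hn w (by rwa [Function.iterate_succ_apply'])

variable {u : R}

theorem smul_top_le_comap (g : M →ₛₗ[σ] M) (hu : u ∣ σ u) :
    u • (⊤ : Submodule R M) ≤ (u • (⊤ : Submodule R M)).comap g := by
  obtain ⟨c, hc⟩ := hu
  rintro _ ⟨y, -, rfl⟩
  change g (u • y) ∈ u • (⊤ : Submodule R M)
  rw [map_smulₛₗ, hc, mul_smul]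
  exact smul_mem_pointwise_smul _ _ _ mem_top

theorem mem_smul_top_of_apply_mem_smul_top [IsNoetherian R M]
    (hσ : ∀ r, ∃ a, u ∣ r - σ a) (hu : u ∣ σ u) (g : M →ₛₗ[σ] M) {A : Submodule R M}
    (hA : A ≤ span R (g '' A)) {z : M} (hz : z ∈ A) (hgz : g z ∈ u • (⊤ : Submodule R M)) :
    z ∈ u • (⊤ : Submodule R M) := by
  let gq := (u • (⊤ : Submodule R M)).mapQ (u • ⊤) g (smul_top_le_comap g hu)
  have hσ' : ∀ r, ∃ a, r - σ a ∈ Module.annihilator R (QuotSMulTop u M) := fun r ↦ by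
    obtain ⟨a, c, hc⟩ := hσ r
    exact ⟨a, hc ▸ Ideal.mul_mem_right c _ (QuotSMulTop.mem_annihilator (M := M) u)⟩
  have hAq : A.map (mkQ _) ≤ span R (gq '' (A.map (mkQ (u • ⊤)) : Set (QuotSMulTop u M))) := by
    rw [map_coe, Set.image_image]
    refine (map_mono hA).trans_eq ?_
    rw [map_span, Set.image_image]
    rfl
  rw [← Quotient.mk_eq_zero]
  exact eq_zero_of_mem_of_apply_eq_zero hσ' gq hAq (mem_map_of_mem hz)
    ((Quotient.mk_eq_zero _).mpr hgz)

theorem exists_eq_apply_add_smul_of_mem_span (hσ : ∀ r, ∃ a, u ∣ r - σ a) (g : M →ₛₗ[σ] M)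
    {B : Submodule R M} {y : M} (hy : y ∈ span R (g '' B)) :
    ∃ z ∈ B, ∃ y' ∈ span R (g '' B), y = g z + u • y' := by
  induction hy using span_induction with
  | mem _ hy =>
    obtain ⟨z, hz, rfl⟩ := hy
    exact ⟨z, hz, 0, zero_mem _, by rw [smul_zero, add_zero]⟩
  | zero => exact ⟨0, zero_mem _, 0, zero_mem _, by rw [map_zero, smul_zero, add_zero]⟩
  | add _ _ _ _ hx hy =>
    obtain ⟨z₁, hz₁, y₁, hy₁, rfl⟩ := hx
    obtain ⟨z₂, hz₂, y₂, hy₂, rfl⟩ := hy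
    exact ⟨z₁ + z₂, add_mem hz₁ hz₂, y₁ + y₂, add_mem hy₁ hy₂, by rw [map_add, smul_add]; abel⟩
  | smul r _ _ hx =>
    obtain ⟨z, hz, y', hy', rfl⟩ := hx
    obtain ⟨a, b, hb⟩ := hσ r
    refine ⟨a • z, B.smul_mem a hz, b • g z + r • y',
      add_mem (smul_mem _ b (subset_span ⟨z, hz, rfl⟩)) (smul_mem _ r hy'), ?_⟩
    rw [map_smulₛₗ, smul_add, smul_add, smul_smul, smul_smul, smul_smul, mul_comm u r,
      ← add_assoc, ← add_smul, ← hb, add_sub_cancel]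

theorem comap_lsmul_le_span_image [IsNoetherian R M] (hσ : ∀ r, ∃ a, u ∣ r - σ a)
    {q : ℕ} (hq : 0 < q) (hu : σ u = u ^ q) (hreg : IsSMulRegular M u) (g : M →ₛₗ[σ] M)
    {B : Submodule R M} (hB : B ≤ span R (g '' B)) :
    B.comap (LinearMap.lsmul R M u) ≤ span R (g '' B.comap (LinearMap.lsmul R M u)) := by
  have hBle : B ≤ B.comap (LinearMap.lsmul R M u) := fun x hx ↦ B.smul_mem u hx
  intro x hx
  obtain ⟨z, hz, y', hy', hxz⟩ :=
    exists_eq_apply_add_smul_of_mem_span hσ g (hB (show u • x ∈ B from hx))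
  have hgz : g z ∈ u • (⊤ : Submodule R M) :=
    (mem_smul_pointwise_iff_exists _ _ _).mpr ⟨x - y', mem_top, by
      rw [smul_sub, sub_eq_iff_eq_add]; exact hxz⟩
  obtain ⟨w, -, rfl⟩ := (mem_smul_pointwise_iff_exists _ _ _).mp
    (mem_smul_top_of_apply_mem_smul_top hσ (hu ▸ dvd_pow_self u hq.ne') g hB hz hgz)
  have hx' : x = u ^ (q - 1) • g w + y' := hreg <| by
    change u • x = u • _
    rw [hxz, map_smulₛₗ, hu, ← mul_pow_sub_one hq.ne' u, mul_smul, smul_add]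
  rw [hx']
  exact add_mem (smul_mem _ _ (subset_span ⟨w, hz, rfl⟩)) (span_mono (Set.image_mono hBle) hy')

end LinearMap

namespace Submodule

variable {R M : Type*} [CommRing R] [AddCommGroup M] [Module R M] {σ : R →+* R}

def IsMultiplicative (g : M →ₛₗ[σ] M) (N : Submodule R M) : Prop :=
  span R (g '' N) = N

variable {g : M →ₛₗ[σ] M} {N : Submodule R M}

theorem isMultiplicative_iff : N.IsMultiplicative g ↔ N ≤ N.comap g ∧ N ≤ span R (g '' N) := by
  rw [IsMultiplicative, le_antisymm_iff, span_le, Set.image_subset_iff]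
  rfl

theorem IsMultiplicative.le_comap (hN : N.IsMultiplicative g) : N ≤ N.comap g :=
  (isMultiplicative_iff.mp hN).1

theorem IsMultiplicative.le_span (hN : N.IsMultiplicative g) : N ≤ span R (g '' N) :=
  hN.ge

theorem isMultiplicative_sSup {S : Set (Submodule R M)} (hS : ∀ N ∈ S, N.IsMultiplicative g) :
    (sSup S).IsMultiplicative g :=
  isMultiplicative_iff.mpr
    ⟨sSup_le fun N hN ↦ (hS N hN).le_comap.trans (comap_mono (le_sSup hN)),
      sSup_le fun N hN ↦ (hS N hN).le_span.trans (span_mono (Set.image_mono (le_sSup hN)))⟩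

variable (g) in
def maxMultiplicative : Submodule R M :=
  sSup {N | N.IsMultiplicative g}

variable (g) in
theorem isMultiplicative_maxMultiplicative : (maxMultiplicative g).IsMultiplicative g :=
  isMultiplicative_sSup fun _ ↦ id

theorem IsMultiplicative.le_maxMultiplicative (hN : N.IsMultiplicative g) :
    N ≤ maxMultiplicative g :=
  le_sSup hN

theorem IsMultiplicative.comap_mkQ (hN : N.IsMultiplicative g) {Q : Submodule R (M ⧸ N)}
    (hQ : Q.IsMultiplicative (N.mapQ N g hN.le_comap)) : (Q.comap N.mkQ).IsMultiplicative g := by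
  set P := Q.comap N.mkQ
  have hNP : N ≤ P := by rw [← ker_mkQ N]; exact LinearMap.ker_le_comap _
  have hQP : Q = (span R (g '' P)).map N.mkQ := by
    rw [map_span, Set.image_image]
    nth_rewrite 1 [← hQ, ← map_comap_eq_of_surjective N.mkQ_surjective Q, map_coe, Set.image_image]
    rfl
  refine isMultiplicative_iff.mpr ⟨fun x hx ↦ hQ.le_comap hx, fun x hx ↦ ?_⟩
  have hx' : x ∈ ((span R (g '' P)).map N.mkQ).comap N.mkQ := hQP ▸ hx
  rw [comap_map_mkQ] at hx'
  exact sup_le (hN.le_span.trans (span_mono (Set.image_mono hNP))) le_rfl hx'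

theorem eq_bot_of_isMultiplicative_mapQ {Q : Submodule R (M ⧸ maxMultiplicative g)}
    (hQ : Q.IsMultiplicative ((maxMultiplicative g).mapQ _ g
      (isMultiplicative_maxMultiplicative g).le_comap)) : Q = ⊥ := by
  have hle := ((isMultiplicative_maxMultiplicative g).comap_mkQ hQ).le_maxMultiplicative
  rw [← map_comap_eq_of_surjective (mkQ_surjective _) Q, ← LinearMap.le_ker_iff_map, ker_mkQ]
  exact hle

theorem IsMultiplicative.iSup_comap_lsmul_pow [IsNoetherian R M] {u : R}
    (hσ : ∀ r, ∃ a, u ∣ r - σ a) {q : ℕ} (hq : 0 < q) (hu : σ u = u ^ q)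
    (hreg : IsSMulRegular M u) (hN : N.IsMultiplicative g) :
    (⨆ n, N.comap (LinearMap.lsmul R M (u ^ n))).IsMultiplicative g := by
  set C : ℕ → Submodule R M := fun n ↦ N.comap (LinearMap.lsmul R M (u ^ n))
  have hC_succ (n : ℕ) : C (n + 1) = (C n).comap (LinearMap.lsmul R M u) := by
    ext x
    simp only [C, mem_comap, LinearMap.lsmul_apply, pow_succ, mul_smul]
  have hC_span (n : ℕ) : C n ≤ span R (g '' C n) := by
    induction n with
    | zero =>
      have hC_zero : C 0 = N := by ext x; simp [C]
      exact hC_zero ▸ hN.le_span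
    | succ n ih => exact hC_succ n ▸ LinearMap.comap_lsmul_le_span_image hσ hq hu hreg g ih
  refine isMultiplicative_iff.mpr ⟨iSup_le fun n x hx ↦ ?_, iSup_le fun n ↦
    (hC_span n).trans (span_mono (Set.image_mono (le_iSup C n)))⟩
  refine le_iSup C (q * n) (?_ : u ^ (q * n) • g x ∈ N)
  rw [pow_mul, ← hu, ← map_pow, ← map_smulₛₗ]
  exact hN.le_comap hx

theorem mem_maxMultiplicative_of_smul_mem [IsNoetherian R M] {u : R}
    (hσ : ∀ r, ∃ a, u ∣ r - σ a) {q : ℕ} (hq : 0 < q) (hu : σ u = u ^ q)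
    (hreg : IsSMulRegular M u) {x : M} (hx : u • x ∈ maxMultiplicative g) :
    x ∈ maxMultiplicative g := by
  have hsat := ((isMultiplicative_maxMultiplicative g).iSup_comap_lsmul_pow hσ hq hu
    hreg).le_maxMultiplicative
  exact hsat (le_iSup (fun n ↦ (maxMultiplicative g).comap (LinearMap.lsmul R M (u ^ n))) 1
    (by simpa using hx))

end Submodule

theorem PowerSeries.exists_X_dvd_sub_of_map_C {A : Type*} [CommRing A] {F : A →+* A}
    (hF : Function.Surjective F) {φ : PowerSeries A →+* PowerSeries A}
    (hφC : ∀ a, φ (C a) = C (F a)) (r : PowerSeries A) : ∃ a, X ∣ r - φ a := by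
  obtain ⟨c, hc⟩ := hF (constantCoeff r)
  refine ⟨C c, ?_⟩
  rw [hφC, hc, X_dvd_iff, map_sub, constantCoeff_C, sub_self]

/-- **Lemma 2.3 (lem-multi).** Let `𝔐` be a finitely generated `𝔖`-module with a `φ`-semilinear
endomorphism `φ_𝔐`.  There exists a `φ_𝔐`-stable submodule `𝔐^m ⊆ 𝔐` which is multiplicative
(the `𝔖`-span of `φ_𝔐(𝔐^m)` is all of `𝔐^m`) such that the quotient `𝔐^n = 𝔐/𝔐^m`, with the
induced Frobenius, has no nonzero multiplicative submodule.  Moreover, if `𝔐` is `u`-torsion free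
then so are `𝔐^m` and `𝔐^n`. -/
theorem stmt1 (p : ℕ) [Fact p.Prime] (k : Type*) [Field k] [CharP k p] [PerfectField k]
    (φ : PowerSeries (WittVector p k) →+* PowerSeries (WittVector p k))
    (hφu : φ PowerSeries.X = PowerSeries.X ^ p)
    (hφC : ∀ a : WittVector p k,
      φ (PowerSeries.C (R := WittVector p k) a) = PowerSeries.C (R := WittVector p k) (WittVector.frobenius a))
    (M : Type*) [AddCommGroup M] [Module (PowerSeries (WittVector p k)) M]
    [Module.Finite (PowerSeries (WittVector p k)) M]
    (φM : M →+ M)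
    (hφM : ∀ (f : PowerSeries (WittVector p k)) (x : M), φM (f • x) = φ f • φM x) :
    ∃ (Mm : Submodule (PowerSeries (WittVector p k)) M)
      (φn : (M ⧸ Mm) →+ (M ⧸ Mm)),
      (∀ x ∈ Mm, φM x ∈ Mm) ∧
      Submodule.span (PowerSeries (WittVector p k)) (⇑φM '' (Mm : Set M)) = Mm ∧
      (∀ x : M, φn (Submodule.Quotient.mk x) = Submodule.Quotient.mk (φM x)) ∧
      (∀ Q : Submodule (PowerSeries (WittVector p k)) (M ⧸ Mm),
        Submodule.span (PowerSeries (WittVector p k)) (⇑φn '' (Q : Set (M ⧸ Mm))) = Q → Q = ⊥) ∧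
      ((∀ x : M, (PowerSeries.X : PowerSeries (WittVector p k)) • x = 0 → x = 0) →
        (∀ x ∈ Mm, (PowerSeries.X : PowerSeries (WittVector p k)) • x = (0 : M) → x = 0) ∧
        (∀ y : M ⧸ Mm, (PowerSeries.X : PowerSeries (WittVector p k)) • y = 0 → y = 0)) := by
  let g : M →ₛₗ[φ] M := { toFun := φM, map_add' := φM.map_add, map_smul' := hφM }
  have hmult := Submodule.isMultiplicative_maxMultiplicative g
  have hσ := PowerSeries.exists_X_dvd_sub_of_map_C (WittVector.frobenius_bijective p k).2 hφC
  have : IsNoetherian (PowerSeries (WittVector p k)) M :=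
    isNoetherian_of_isNoetherianRing_of_finite _ _
  refine ⟨_, ((Submodule.maxMultiplicative g).mapQ _ g hmult.le_comap).toAddMonoidHom,
    hmult.le_comap, hmult, fun _ ↦ rfl, fun Q hQ ↦ Submodule.eq_bot_of_isMultiplicative_mapQ hQ,
    fun htf ↦ ⟨fun x _ ↦ htf x, fun y hy ↦ ?_⟩⟩
  obtain ⟨x, rfl⟩ := Submodule.mkQ_surjective _ y
  rw [← map_smul] at hy
  rw [Submodule.mkQ_apply, Submodule.Quotient.mk_eq_zero] at hy ⊢
  exact Submodule.mem_maxMultiplicative_of_smul_mem hσ (Fact.out : p.Prime).pos hφu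
    (.of_right_eq_zero_of_smul htf) hy
end

section
/- Let M be a finitely generated 𝔖-module such that for every n > 0 the quotient M/p^nM is u-torsion free (i.e. for x ∈ M, if u·x ∈ p^n·M then x ∈ p^n·M). Then for every n > 0 the quotient M/(M[p^n] + pM) is also u-torsion free, where M[p^n] denotes the submodule of elements of M killed by p^n; i.e. for x ∈ M, if u·x ∈ M[p^n] + p·M then x ∈ M[p^n] + p·M. -/
/-- **Lemma 2.4 (lem Zp module structure).** Let `M` be a finitely generated `𝔖`-module,
`𝔖 = W(k)⟦u⟧`.  If `M/p^nM` is `u`-torsion free for every `n > 0`, then `M/(M[p^n] + pM)` is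
`u`-torsion free for every `n > 0`. -/
theorem stmt2 (p : ℕ) [Fact p.Prime] (k : Type*) [Field k] [CharP k p] [PerfectField k]
    (M : Type*) [AddCommGroup M] [Module (PowerSeries (WittVector p k)) M]
    [Module.Finite (PowerSeries (WittVector p k)) M]
    (h : ∀ n : ℕ, 0 < n → ∀ x : M,
      (∃ y : M, (PowerSeries.X : PowerSeries (WittVector p k)) • x =
        ((p : PowerSeries (WittVector p k)) ^ n) • y) →
      ∃ y : M, x = ((p : PowerSeries (WittVector p k)) ^ n) • y) :
    ∀ n : ℕ, 0 < n → ∀ x : M,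
      (∃ t y : M, ((p : PowerSeries (WittVector p k)) ^ n) • t = 0 ∧
        (PowerSeries.X : PowerSeries (WittVector p k)) • x =
          t + (p : PowerSeries (WittVector p k)) • y) →
      ∃ t y : M, ((p : PowerSeries (WittVector p k)) ^ n) • t = 0 ∧
        x = t + (p : PowerSeries (WittVector p k)) • y := by
  intro n hn x ⟨t, y, ht, hxy⟩
  set R := PowerSeries (WittVector p k)
  have key : (PowerSeries.X : R) • (((p : R) ^ n) • x) = ((p : R) ^ (n + 1)) • y := by
    rw [smul_comm, hxy, smul_add, ht, zero_add, smul_smul, pow_succ]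
  obtain ⟨z, hz⟩ := h (n + 1) n.succ_pos (((p : R) ^ n) • x) ⟨y, key⟩
  refine ⟨x - (p : R) • z, z, ?_, by abel⟩
  rw [smul_sub, hz, smul_smul, pow_succ, sub_self]
end

section
/- Let M be a finitely generated 𝔖-module such that (i) the torsion submodule of M is killed by p^N for some N ∈ ℕ (this holds for every finitely generated generalized Breuil–Kisin module by Bhatt–Morrow–Scholze), and (ii) for every n > 0 the quotient M/p^nM is u-torsion free. Then M is isomorphic as an 𝔖-module to a finite direct sum 𝔖^r ⊕ ⊕_{i=1}^{s} 𝔖/(p^{e_i}) for some r, s ∈ ℕ and exponents e_i ≥ 1; equivalently, there exists a finitely generated ℤ_p-module N with M ≅ N ⊗_{ℤ_p} 𝔖 as 𝔖-modules. -/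
/-!
`M` has no `u`-torsion: if `u • x = 0` then `p^N • x = 0`, and `x = p^N • y` by the hypothesis on
`M/p^N M`, so `p^{2N} • y = 0`, whence `p^N • y = x = 0`.

By the structure theorem over the discrete valuation ring `W(k)`,
`M/uM ≅ W(k)^r ⊕ ⨁ W(k)/(p^{e_i})`. The torsion generators lift to elements of `M` killed by
`p^{e_i}` (again because `M/p^{e_i}M` is `u`-torsion free), so there is a map
`𝔖^r ⊕ ⨁ 𝔖/(p^{e_i}) → M` lifting this isomorphism. It is onto by Nakayama, `u` being in the
Jacobson radical of `𝔖`. It is injective: the constant terms of a relation `∑ bᵢ mᵢ = 0` form a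
relation in `M/uM`, so they are multiples of the `p^{e_i}` (resp. zero) and contribute nothing;
hence the relation is `u` times the relation formed by the shifted series `(bᵢ - bᵢ(0))/u`, which
is again a relation since `M` has no `u`-torsion. Inductively every coefficient of `bᵢ` is
divisible by `p^{e_i}` (resp. zero).
-/

open PowerSeries Submodule
open scoped Pointwise

section CommRing

variable {R M : Type*} [CommRing R] [AddCommGroup M] [Module R M]

theorem isSMulRegular_of_dvd_of_torsion_smul_eq_zero [IsDomain R] {u a : R}
    (hu : u ≠ 0) (ha : a ≠ 0)
    (htor : ∀ x : M, (∃ f : R, f ≠ 0 ∧ f • x = 0) → a • x = 0)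
    (hdiv : ∀ x : M, (∃ y, u • x = a • y) → ∃ y, x = a • y) :
    IsSMulRegular M u := by
  refine isSMulRegular_iff_right_eq_zero_of_smul.mpr fun x hx => ?_
  obtain ⟨y, rfl⟩ := hdiv x ⟨0, by rw [hx, smul_zero]⟩
  have hy : (a * a) • y = 0 := by rw [mul_smul]; exact htor _ ⟨u, hu, hx⟩
  exact htor y ⟨a * a, mul_ne_zero ha ha, hy⟩

theorem QuotSMulTop.exists_mk_eq_of_smul_eq_zero {u a : R}
    (hdiv : ∀ x : M, (∃ y, u • x = a • y) → ∃ y, x = a • y)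
    {q : QuotSMulTop u M} (hq : a • q = 0) :
    ∃ m : M, Submodule.Quotient.mk m = q ∧ a • m = 0 := by
  obtain ⟨m, rfl⟩ := Submodule.Quotient.mk_surjective _ q
  rw [← Submodule.Quotient.mk_smul, Submodule.Quotient.mk_eq_zero,
    Submodule.mem_smul_pointwise_iff_exists] at hq
  obtain ⟨z, -, hz⟩ := hq
  obtain ⟨w, rfl⟩ := hdiv z ⟨m, hz⟩
  refine ⟨m - u • w, ?_, ?_⟩
  · rw [Submodule.Quotient.mk_sub, sub_eq_self, Submodule.Quotient.mk_eq_zero]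
    exact Submodule.smul_mem_pointwise_smul w u ⊤ trivial
  · rw [smul_sub, ← hz, smul_comm, sub_self]

end CommRing

theorem PowerSeries.C_dvd_iff {R : Type*} [CommRing R] {a : R} {f : R⟦X⟧} :
    C a ∣ f ↔ ∀ n, a ∣ coeff n f := by
  refine ⟨fun ⟨g, hg⟩ n => ⟨coeff n g, by rw [hg, coeff_C_mul]⟩, fun h => ?_⟩
  choose g hg using h
  exact ⟨mk g, ext fun n => by rw [coeff_C_mul, coeff_mk, hg]⟩

theorem PowerSeries.span_X_le_jacobson_bot {R : Type*} [CommRing R] :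
    Ideal.span {(X : R⟦X⟧)} ≤ Ideal.jacobson ⊥ := by
  rw [Ideal.span_le, Set.singleton_subset_iff, SetLike.mem_coe, Ideal.mem_jacobson_bot]
  intro f
  simp [isUnit_iff_constantCoeff]

section QuotientPi

variable {R Q : Type*} [CommRing R] [AddCommGroup Q] [Module R Q]
  {ι : Type*} [Fintype ι] [DecidableEq ι] {c : ι → R}

theorem sum_smul_single_one_quotient (a : ι → R) :
    ∑ i, a i • (Pi.single i 1 : Π i, R ⧸ Ideal.span {c i}) =
      fun i => Ideal.Quotient.mk _ (a i) := by
  simp_rw [← Pi.single_smul, Algebra.smul_def, mul_one, Ideal.Quotient.algebraMap_eq]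
  exact Finset.univ_sum_single _

theorem linearCombination_symm_single_one (φ : Q ≃ₗ[R] Π i, R ⧸ Ideal.span {c i}) (a : ι → R) :
    Fintype.linearCombination R (fun i => φ.symm (Pi.single i 1)) a =
      φ.symm fun i => Ideal.Quotient.mk _ (a i) := by
  simp_rw [Fintype.linearCombination_apply, ← map_smul, ← map_sum, sum_smul_single_one_quotient]

end QuotientPi

noncomputable def piQuotientSpanSumEquivProd (R : Type*) [CommRing R] {n : ℕ} {ι : Type*}
    (c : Fin n ⊕ ι → R) (d : ι → R)
    (hc₀ : ∀ j, c (.inl j) = 0) (hcd : ∀ i, c (.inr i) = d i) :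
    (Π κ, R ⧸ Ideal.span {c κ}) ≃ₗ[R] (Fin n → R) × Π i, R ⧸ Ideal.span {d i} :=
  LinearEquiv.sumPiEquivProdPi R _ _ _ ≪≫ₗ LinearEquiv.prodCongr
    (LinearEquiv.piCongrRight fun j => quotEquivOfEqBot _ (by simp [hc₀]))
    (LinearEquiv.piCongrRight fun i => quotEquivOfEq _ _ (by rw [hcd]))

theorem nonempty_linearEquiv_pi_subtype {R : Type*} [Semiring R] {ι : Type*} (P : ι → Prop)
    (φ : ι → Type*) [∀ i, AddCommMonoid (φ i)] [∀ i, Module R (φ i)]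
    (h : ∀ i, ¬ P i → Subsingleton (φ i)) :
    Nonempty ((Π i, φ i) ≃ₗ[R] Π i : Subtype P, φ i) := by
  classical
  refine ⟨.ofBijective (LinearMap.pi fun i => LinearMap.proj i.1)
    ⟨fun f g hfg => funext fun i => ?_,
      fun g => ⟨fun i => if hi : P i then g ⟨i, hi⟩ else 0, funext fun i => by simp [i.2]⟩⟩⟩
  by_cases hi : P i
  · exact congrFun hfg ⟨i, hi⟩
  · exact (h i hi).elim _ _

theorem exists_pos_exponents_pi_quotient_span_pow_equiv {R : Type*} [CommRing R] (x : R)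
    {ι : Type*} [Fintype ι] (e : ι → ℕ) :
    ∃ (s : ℕ) (e' : Fin s → ℕ), (∀ j, 1 ≤ e' j) ∧
      Nonempty ((Π i, R ⧸ Ideal.span {x ^ e i}) ≃ₗ[R] Π j, R ⧸ Ideal.span {x ^ e' j}) := by
  classical
  obtain ⟨ψ⟩ := nonempty_linearEquiv_pi_subtype (R := R) (fun i => e i ≠ 0)
    (fun i => R ⧸ Ideal.span {x ^ e i}) fun i hi => by
      rw [Submodule.Quotient.subsingleton_iff, not_not.mp hi, pow_zero, Ideal.span_singleton_one]
  let σ := (Fintype.equivFin {i // e i ≠ 0}).symm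
  exact ⟨_, fun j => e (σ j), fun j => Nat.one_le_iff_ne_zero.mpr (σ j).2,
    ⟨ψ ≪≫ₗ (LinearEquiv.piCongrLeft R
      (fun i : {i // e i ≠ 0} => R ⧸ Ideal.span {x ^ e i}) σ).symm⟩⟩

theorem IsDiscreteValuationRing.exists_linearEquiv_prod_pi_quotient {R : Type*} [CommRing R]
    [IsDomain R] [IsDiscreteValuationRing R] {ϖ : R} (hϖ : Irreducible ϖ)
    (Q : Type*) [AddCommGroup Q] [Module R Q] [Module.Finite R Q] :
    ∃ (n s : ℕ) (e : Fin s → ℕ), (∀ j, 1 ≤ e j) ∧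
      Nonempty (Q ≃ₗ[R] (Fin n → R) × Π j, R ⧸ Ideal.span {ϖ ^ e j}) := by
  obtain ⟨n, ι, _, q, hq, e, ⟨φ⟩⟩ := Module.equiv_free_prod_directSum R Q
  have hspan (i : ι) : R ∙ q i ^ e i = Ideal.span {ϖ ^ e i} :=
    Ideal.span_singleton_eq_span_singleton.mpr
      ((IsDiscreteValuationRing.associated_of_irreducible _ (hq i) hϖ).pow_pow)
  obtain ⟨s, e', he', ⟨ψ⟩⟩ := exists_pos_exponents_pi_quotient_span_pow_equiv ϖ e
  exact ⟨n, s, e', he', ⟨φ ≪≫ₗ LinearEquiv.prodCongr (Finsupp.linearEquivFunOnFinite R R _)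
    (DirectSum.linearEquivFunOnFintype R ι _ ≪≫ₗ
      LinearEquiv.piCongrRight (fun i => quotEquivOfEq _ _ (hspan i)) ≪≫ₗ ψ)⟩⟩

section PowerSeries

variable {W M : Type*} [CommRing W] [AddCommGroup M] [Module W⟦X⟧ M] [Module W M]
  [IsScalarTower W W⟦X⟧ M]

local notation "M₀" => QuotSMulTop (X : W⟦X⟧) M

theorem QuotSMulTop.smul_eq_constantCoeff_smul (f : W⟦X⟧) (q : M₀) :
    f • q = constantCoeff f • q := by
  conv_lhs => rw [eq_X_mul_shift_add_const f]
  rw [add_smul, mul_smul, Module.mem_annihilator.mp (QuotSMulTop.mem_annihilator M X), zero_add]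
  exact algebraMap_smul W⟦X⟧ (constantCoeff f) q

theorem QuotSMulTop.restrictScalars_span_X_eq (s : Set (M₀)) :
    (span W⟦X⟧ s).restrictScalars W = span W s := by
  refine le_antisymm (fun q hq => ?_) (span_le_restrictScalars W W⟦X⟧ s)
  let N : Submodule W⟦X⟧ (M₀) :=
    { span W s with
      smul_mem' := fun f q hq => by
        rw [smul_eq_constantCoeff_smul]
        exact (span W s).smul_mem _ hq }
  exact (span_le (p := N)).mpr subset_span hq

instance [Module.Finite W⟦X⟧ M] : Module.Finite W (M₀) := by
  obtain ⟨s, hs⟩ := Module.Finite.fg_top (R := W⟦X⟧) (M := M₀)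
  exact ⟨s, by rw [← QuotSMulTop.restrictScalars_span_X_eq, hs, restrictScalars_top]⟩

variable {κ : Type*} [Fintype κ] {m : κ → M} {c : κ → W}

theorem dvd_coeff_of_sum_smul_eq_zero (hreg : IsSMulRegular M (X : W⟦X⟧))
    (hc : ∀ i, C (c i) • m i = 0)
    (hrel : LinearMap.ker (Fintype.linearCombination W fun i =>
      (Submodule.Quotient.mk (m i) : M₀)) ≤ pi Set.univ fun i => Ideal.span {c i})
    (n : ℕ) (b : κ → W⟦X⟧) (hb : ∑ i, b i • m i = 0) (i : κ) : c i ∣ coeff n (b i) := by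
  have hconst : ∀ b : κ → W⟦X⟧, ∑ i, b i • m i = 0 → ∀ i, c i ∣ constantCoeff (b i) := by
    intro b hb i
    refine Ideal.mem_span_singleton.mp (hrel (x := fun i => constantCoeff (b i)) ?_ i trivial)
    have := congrArg (mkQ ((X : W⟦X⟧) • (⊤ : Submodule W⟦X⟧ M))) hb
    simp only [map_sum, map_smul, map_zero, mkQ_apply,
      QuotSMulTop.smul_eq_constantCoeff_smul] at this
    rwa [LinearMap.mem_ker, Fintype.linearCombination_apply]
  induction n generalizing b with
  | zero => simpa using hconst b hb i
  | succ n ih =>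
    choose w hw using hconst b hb
    set b' : κ → W⟦X⟧ := fun i => mk fun n => coeff (n + 1) (b i)
    have hb' : ∑ i, b' i • m i = 0 := by
      refine isSMulRegular_iff_right_eq_zero_of_smul.mp hreg _ ?_
      rw [← hb, Finset.smul_sum]
      refine Finset.sum_congr rfl fun i _ => ?_
      conv_rhs => rw [eq_X_mul_shift_add_const (b i), hw i]
      rw [add_smul, mul_smul, map_mul, mul_comm, mul_smul, hc, smul_zero, add_zero]
    simpa [b', coeff_succ_X_mul] using ih b' hb'

theorem ker_linearCombination_eq_pi_span (hreg : IsSMulRegular M (X : W⟦X⟧))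
    (hc : ∀ i, C (c i) • m i = 0)
    (hrel : LinearMap.ker (Fintype.linearCombination W fun i =>
      (Submodule.Quotient.mk (m i) : M₀)) ≤ pi Set.univ fun i => Ideal.span {c i}) :
    LinearMap.ker (Fintype.linearCombination W⟦X⟧ m) =
      pi Set.univ fun i => Ideal.span {C (c i)} := by
  ext b
  simp only [LinearMap.mem_ker, Fintype.linearCombination_apply, mem_pi, Set.mem_univ,
    true_implies, Ideal.mem_span_singleton]
  refine ⟨fun hb i => C_dvd_iff.mpr fun n => dvd_coeff_of_sum_smul_eq_zero hreg hc hrel n b hb i,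
    fun hb => ?_⟩
  choose w hw using hb
  simp [hw, mul_comm, mul_smul, hc]

theorem surjective_linearCombination_of_surjective_quotSMulTop [Module.Finite W⟦X⟧ M]
    (hspan : Function.Surjective (Fintype.linearCombination W fun i =>
      (Submodule.Quotient.mk (m i) : M₀))) :
    Function.Surjective (Fintype.linearCombination W⟦X⟧ m) := by
  refine LinearMap.surjective_of_surjective_comp_mkQ _ _ span_X_le_jacobson_bot ?_
  rw [ideal_span_singleton_smul]
  intro q
  obtain ⟨a, rfl⟩ := hspan q
  refine ⟨fun i => C (a i), ?_⟩
  simp [Fintype.linearCombination_apply, ← algebraMap_smul W⟦X⟧]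

theorem nonempty_linearEquiv_pi_quotient_of_quotSMulTop [Module.Finite W⟦X⟧ M]
    (hreg : IsSMulRegular M (X : W⟦X⟧)) (hc : ∀ i, C (c i) • m i = 0)
    (hrel : LinearMap.ker (Fintype.linearCombination W fun i =>
      (Submodule.Quotient.mk (m i) : M₀)) ≤ pi Set.univ fun i => Ideal.span {c i})
    (hspan : Function.Surjective (Fintype.linearCombination W fun i =>
      (Submodule.Quotient.mk (m i) : M₀))) :
    Nonempty (M ≃ₗ[W⟦X⟧] Π i, W⟦X⟧ ⧸ Ideal.span {C (c i)}) := by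
  classical
  exact ⟨(LinearMap.quotKerEquivOfSurjective _
    (surjective_linearCombination_of_surjective_quotSMulTop hspan)).symm ≪≫ₗ
    quotEquivOfEq _ _ (ker_linearCombination_eq_pi_span hreg hc hrel) ≪≫ₗ quotientPi _⟩

variable [DecidableEq κ]

theorem nonempty_linearEquiv_pi_quotient_of_linearEquiv_quotSMulTop [Module.Finite W⟦X⟧ M]
    (hreg : IsSMulRegular M (X : W⟦X⟧))
    (hdiv : ∀ i (x : M), (∃ y, (X : W⟦X⟧) • x = C (c i) • y) → ∃ y, x = C (c i) • y)
    (φ : M₀ ≃ₗ[W] Π i, W ⧸ Ideal.span {c i}) :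
    Nonempty (M ≃ₗ[W⟦X⟧] Π i, W⟦X⟧ ⧸ Ideal.span {C (c i)}) := by
  have hkill (i : κ) : C (c i) • φ.symm (Pi.single i 1) = 0 := by
    rw [show C (c i) • _ = c i • _ from algebraMap_smul W⟦X⟧ (c i) _, ← map_smul,
      ← Pi.single_smul, Algebra.smul_def, mul_one, Ideal.Quotient.algebraMap_eq,
      Ideal.Quotient.eq_zero_iff_mem.mpr (Ideal.mem_span_singleton_self _), Pi.single_zero,
      map_zero]
  choose m hm hmc using fun i => QuotSMulTop.exists_mk_eq_of_smul_eq_zero (hdiv i) (hkill i)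
  have hlc : (fun i => (Submodule.Quotient.mk (m i) : M₀)) =
      fun i => φ.symm (Pi.single i 1) := funext hm
  refine nonempty_linearEquiv_pi_quotient_of_quotSMulTop hreg hmc ?_ ?_ <;> rw [hlc]
  · intro a ha i _
    rw [LinearMap.mem_ker, linearCombination_symm_single_one, LinearEquiv.map_eq_zero_iff] at ha
    exact Ideal.Quotient.eq_zero_iff_mem.mp (congrFun ha i)
  · intro q
    choose a ha using fun i => Ideal.Quotient.mk_surjective (φ q i)
    exact ⟨a, by rw [linearCombination_symm_single_one, funext ha, φ.symm_apply_apply]⟩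

theorem PowerSeries.exists_linearEquiv_prod_pi_quotient_pow [IsDomain W]
    [IsDiscreteValuationRing W] {ϖ : W} (hϖ : Irreducible ϖ) [Module.Finite W⟦X⟧ M]
    (hreg : IsSMulRegular M (X : W⟦X⟧))
    (hdiv : ∀ n (x : M), (∃ y, (X : W⟦X⟧) • x = C ϖ ^ n • y) → ∃ y, x = C ϖ ^ n • y) :
    ∃ (r s : ℕ) (e : Fin s → ℕ), (∀ i, 1 ≤ e i) ∧
      Nonempty (M ≃ₗ[W⟦X⟧] (Fin r → W⟦X⟧) × Π i, W⟦X⟧ ⧸ Ideal.span {C ϖ ^ e i}) := by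
  obtain ⟨r, s, e, he, ⟨φ⟩⟩ := IsDiscreteValuationRing.exists_linearEquiv_prod_pi_quotient hϖ M₀
  let c : Fin r ⊕ Fin s → W := Sum.elim 0 fun j => ϖ ^ e j
  have hdivc (κ : Fin r ⊕ Fin s) (x : M) (hx : ∃ y, (X : W⟦X⟧) • x = C (c κ) • y) :
      ∃ y, x = C (c κ) • y := by
    rcases κ with j | j
    · obtain ⟨y, hy⟩ := hx
      exact ⟨0, hreg (by simpa [c] using hy)⟩
    · simpa [c] using hdiv (e j) x (by simpa [c] using hx)
  obtain ⟨ψ⟩ := nonempty_linearEquiv_pi_quotient_of_linearEquiv_quotSMulTop hreg hdivc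
    (φ ≪≫ₗ (piQuotientSpanSumEquivProd _ c _ (fun _ => rfl) fun _ => rfl).symm)
  exact ⟨r, s, e, he, ⟨ψ ≪≫ₗ piQuotientSpanSumEquivProd _ _ _ (fun _ => map_zero C)
    fun j => by simp [c]⟩⟩

end PowerSeries

/-- **Proposition 2.5 (prop Zp module structure).** Let `M` be a finitely generated `𝔖`-module
(`𝔖 = W(k)⟦u⟧`) whose torsion submodule is killed by `p^N` for some `N`, and such that `M/p^nM` is
`u`-torsion free for every `n > 0`.  Then `M` has the shape of a `ℤ_p`-module: it is isomorphic as
an `𝔖`-module to `𝔖^r ⊕ ⊕_{i=1}^{s} 𝔖/(p^{e_i})` with all `e_i ≥ 1`. -/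
theorem stmt3 (p : ℕ) [Fact p.Prime] (k : Type*) [Field k] [CharP k p] [PerfectField k]
    (M : Type*) [AddCommGroup M] [Module (PowerSeries (WittVector p k)) M]
    [Module.Finite (PowerSeries (WittVector p k)) M]
    (N : ℕ)
    (htor : ∀ x : M, (∃ f : PowerSeries (WittVector p k), f ≠ 0 ∧ f • x = 0) →
      ((p : PowerSeries (WittVector p k)) ^ N) • x = 0)
    (h : ∀ n : ℕ, 0 < n → ∀ x : M,
      (∃ y : M, (PowerSeries.X : PowerSeries (WittVector p k)) • x =
        ((p : PowerSeries (WittVector p k)) ^ n) • y) →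
      ∃ y : M, x = ((p : PowerSeries (WittVector p k)) ^ n) • y) :
    ∃ (r s : ℕ) (e : Fin s → ℕ), (∀ i, 1 ≤ e i) ∧
      Nonempty (M ≃ₗ[PowerSeries (WittVector p k)]
        ((Fin r → PowerSeries (WittVector p k)) ×
          ((i : Fin s) → PowerSeries (WittVector p k) ⧸
            Ideal.span {((p : PowerSeries (WittVector p k)) ^ (e i))}))) := by
  let : Module (WittVector p k) M :=
    .compHom M (algebraMap (WittVector p k) (WittVector p k)⟦X⟧)
  have : IsScalarTower (WittVector p k) (WittVector p k)⟦X⟧ M :=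
    .of_algebraMap_smul fun _ _ => rfl
  rw [← map_natCast C p] at htor h ⊢
  have hp : C (p : WittVector p k) ≠ 0 :=
    (map_ne_zero_iff _ C_injective).mpr (WittVector.p_nonzero p k)
  have hdiv (n : ℕ) (x : M)
      (hx : ∃ y, (X : (WittVector p k)⟦X⟧) • x = C (p : WittVector p k) ^ n • y) :
      ∃ y, x = C (p : WittVector p k) ^ n • y := by
    rcases n with _ | n
    · exact ⟨x, by rw [pow_zero, one_smul]⟩
    · exact h _ n.succ_pos x hx
  have hreg : IsSMulRegular M (X : (WittVector p k)⟦X⟧) :=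
    isSMulRegular_of_dvd_of_torsion_smul_eq_zero X_ne_zero (pow_ne_zero N hp) htor (hdiv N)
  exact exists_linearEquiv_prod_pi_quotient_pow (WittVector.irreducible p) hreg hdiv
end

section
/- Let i ≥ 1 and let J ⊆ 𝔖 be an ideal containing u^s and p^N for some s, N ∈ ℕ, and satisfying E^{i−1}·J ⊆ Ideal.map φ J (the ideal of 𝔖 generated by φ(J)). If α ∈ ℕ is such that J + p𝔖 = (u^α) + p𝔖, then (p−1)·α ≤ e·(i−1). (This is the annihilator-ideal form of the paper's exponent inequality: the prismatic Proposition 3.1 shows that J = Ann_𝔖 of the u^∞-torsion of i-th mod p^n prismatic cohomology satisfies the hypotheses.) -/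
/-!
Work modulo `p`. There `J` becomes `(u^α)`, so `φ(J)𝔖 ⊆ (u^{pα}) + (p)` because `φ(u) = u^p`,
while the Eisenstein condition gives `E ≡ u^e`. Hence `u^{e(i-1)+α} ≡ E^{i-1}·u^α` lies in
`(u^{pα}) + (p)`; as `p` is not a unit of `W(k)`, comparing the coefficient of `u^{e(i-1)+α}`
forces `pα ≤ e(i-1) + α`.
-/

open PowerSeries Ideal

theorem PowerSeries.le_of_X_pow_mem_span_X_pow_sup_span_C {R : Type*} [CommRing R] {c : R}
    (hc : ¬IsUnit c) {m n : ℕ} (h : (X : R⟦X⟧) ^ m ∈ span {X ^ n} ⊔ span {C c}) : n ≤ m := by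
  by_contra! hmn
  obtain ⟨f, hf, g, hg, hfg⟩ := Submodule.mem_sup.mp h
  obtain ⟨d, rfl⟩ := mem_span_singleton.mp hg
  have hf_coeff : coeff m f = 0 := X_pow_dvd_iff.mp (mem_span_singleton.mp hf) m hmn
  have hcoeff := congrArg (coeff m) hfg
  rw [map_add, hf_coeff, zero_add, coeff_C_mul, coeff_X_pow_self] at hcoeff
  exact hc (.of_mul_eq_one _ hcoeff)

theorem Ideal.map_le_span_pow_sup_span_of_le {A : Type*} [CommSemiring A] {φ : A →+* A}
    {x q : A} {p : ℕ} (hφx : φ x = x ^ p) (hφq : φ q = q) {J : Ideal A} {α : ℕ}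
    (hJ : J ≤ span {x ^ α} ⊔ span {q}) : J.map φ ≤ span {x ^ (p * α)} ⊔ span {q} := by
  refine (map_mono hJ).trans_eq ?_
  rw [map_sup, map_span, map_span, Set.image_singleton, Set.image_singleton, map_pow, hφx, hφq,
    pow_mul]

theorem PowerSeries.X_pow_add_sum_smodEq_X_pow {R : Type*} [CommRing R] {c : R} {e : ℕ}
    {a : ℕ → R} (ha : ∀ j < e, c ∣ a j) :
    X ^ e + ∑ j ∈ Finset.range e, C (a j) * X ^ j ≡ X ^ e [SMOD span {C c}] := by
  rw [SModEq.sub_mem, add_sub_cancel_left]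
  refine sum_mem fun j hj ↦ ?_
  obtain ⟨b, hb⟩ := ha j (Finset.mem_range.mp hj)
  rw [hb, map_mul]
  exact mul_mem_right _ _ (mul_mem_right _ _ (mem_span_singleton_self _))

theorem stmt4_general (p : ℕ) [Fact p.Prime] (k : Type*) [Field k] [CharP k p]
    (φ : PowerSeries (WittVector p k) →+* PowerSeries (WittVector p k))
    (hφu : φ PowerSeries.X = PowerSeries.X ^ p)
    (e : ℕ) (a : ℕ → WittVector p k)
    (E : PowerSeries (WittVector p k))
    (hE : E = PowerSeries.X ^ e +
      ∑ j ∈ Finset.range e, PowerSeries.C (a j) * PowerSeries.X ^ j)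
    (haDvd : ∀ j < e, (p : WittVector p k) ∣ a j)
    (i : ℕ)
    (J : Ideal (PowerSeries (WittVector p k)))
    (hJ : ∀ x ∈ J, E ^ (i - 1) * x ∈ Ideal.map φ J)
    (α : ℕ)
    (hα : J ⊔ Ideal.span {(p : PowerSeries (WittVector p k))} =
      Ideal.span {(PowerSeries.X : PowerSeries (WittVector p k)) ^ α} ⊔
        Ideal.span {(p : PowerSeries (WittVector p k))}) :
    (p - 1) * α ≤ e * (i - 1) := by
  set I : Ideal (WittVector p k)⟦X⟧ := span {(p : (WittVector p k)⟦X⟧)}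
  set K : Ideal (WittVector p k)⟦X⟧ := span {X ^ (p * α)} ⊔ I
  have hIK : I ≤ K := le_sup_right
  have hφJ : J.map φ ≤ K := map_le_span_pow_sup_span_of_le hφu (map_natCast φ p)
    (hα ▸ le_sup_left)
  have hEu : E ^ (i - 1) ≡ X ^ (e * (i - 1)) [SMOD I] := by
    have hEI := X_pow_add_sum_smodEq_X_pow haDvd
    rw [map_natCast, ← hE] at hEI
    rw [pow_mul]
    exact hEI.pow _
  obtain ⟨y, hy, z, hz, hyz⟩ :=
    Submodule.mem_sup.mp (hα ▸ mem_sup_left (mem_span_singleton_self _) : X ^ α ∈ J ⊔ I)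
  have hEα : E ^ (i - 1) * X ^ α ∈ K := by
    rw [← hyz, mul_add]
    exact add_mem (hφJ (hJ y hy)) (hIK (mul_mem_left _ _ hz))
  have hXα : X ^ (e * (i - 1) + α) ∈ K := by
    rw [pow_add]
    exact SModEq.zero.mp
      (((hEu.mul SModEq.rfl).mono hIK).symm.trans (SModEq.zero.mpr hEα))
  have hle : p * α ≤ e * (i - 1) + α :=
    le_of_X_pow_mem_span_X_pow_sup_span_C (c := (p : WittVector p k))
      (WittVector.irreducible p).not_isUnit (by rwa [map_natCast])
  rw [Nat.sub_one_mul]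
  omega

/-- **Corollary 3.2 (cor exponent inequality), annihilator-ideal form.** Let `𝔖 = W(k)⟦u⟧` with
Frobenius lift `φ` and let `E` be an Eisenstein polynomial of degree `e ≥ 1`.  Let `i ≥ 1` and let
`J ⊆ 𝔖` be an ideal containing `u^s` and `p^N` and satisfying `E^{i-1}·J ⊆ φ(J)𝔖`.  If
`J + (p) = (u^α) + (p)`, then `(p-1)·α ≤ e·(i-1)`. -/
theorem stmt4 (p : ℕ) [Fact p.Prime] (k : Type*) [Field k] [CharP k p] [PerfectField k]
    (φ : PowerSeries (WittVector p k) →+* PowerSeries (WittVector p k))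
    (hφu : φ PowerSeries.X = PowerSeries.X ^ p)
    (hφC : ∀ a : WittVector p k,
      φ (PowerSeries.C a) = PowerSeries.C (WittVector.frobenius a))
    (e : ℕ) (he : 1 ≤ e) (a : ℕ → WittVector p k)
    (E : PowerSeries (WittVector p k))
    (hE : E = PowerSeries.X ^ e +
      ∑ j ∈ Finset.range e, PowerSeries.C (a j) * PowerSeries.X ^ j)
    (haDvd : ∀ j < e, (p : WittVector p k) ∣ a j)
    (ha0 : ¬ ((p : WittVector p k) ^ 2 ∣ a 0))
    (i : ℕ) (hi : 1 ≤ i)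
    (J : Ideal (PowerSeries (WittVector p k)))
    (s N : ℕ)
    (hus : (PowerSeries.X : PowerSeries (WittVector p k)) ^ s ∈ J)
    (hpN : ((p : PowerSeries (WittVector p k)) ^ N) ∈ J)
    (hJ : ∀ x ∈ J, E ^ (i - 1) * x ∈ Ideal.map φ J)
    (α : ℕ)
    (hα : J ⊔ Ideal.span {(p : PowerSeries (WittVector p k))} =
      Ideal.span {(PowerSeries.X : PowerSeries (WittVector p k)) ^ α} ⊔
        Ideal.span {(p : PowerSeries (WittVector p k))}) :
    (p - 1) * α ≤ e * (i - 1) :=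
  stmt4_general p k φ hφu e a E hE haDvd i J hJ α hα
end

section
/- Let i ≥ 1 and let J ⊆ 𝔖 be an ideal containing u^s and p^N for some s, N ∈ ℕ, and satisfying E^{i−1}·J ⊆ Ideal.map φ J (the ideal of 𝔖 generated by φ(J)). If e·(i−1) < p−1, then J = 𝔖. (This is the annihilator-ideal core of Theorem 'control of u-torsion' part (1): applied to the annihilator of the u^∞-torsion of i-th mod p^n prismatic cohomology it yields the vanishing of that torsion.) -/
/-!
Reduce modulo `p`: the image `π(J)` of `J` in `κ⟦u⟧`, `κ` the residue field of `W(k)`, is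
`(u^m)` for some `m` since it contains `u^s`, and `m = 0` already forces `J = 𝔖`. Since the
kernel `p𝔖` of `π` is stable under `φ` and `φ(u) = u^p`, the image of `φ(J)𝔖` lies in
`(u^{pm})`, while `π(E) = u^e`. For `y ∈ J` lifting `u^m`, the hypothesis gives
`u^{e(i-1)+m} ∈ (u^{pm})`, i.e. `(p-1)m ≤ e(i-1) < p-1`, which excludes `m ≥ 1`.
-/

open PowerSeries IsLocalRing

theorem Ideal.eq_top_of_map_eq_top_of_surjective {A B : Type*} [CommRing A] [CommRing B]
    {f : A →+* B} [IsLocalHom f] (hf : Function.Surjective f) {J : Ideal A}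
    (hJ : J.map f = ⊤) : J = ⊤ := by
  obtain ⟨y, hyJ, hy⟩ := (Ideal.mem_map_iff_of_surjective f hf).mp (hJ ▸ Submodule.mem_top)
  exact J.eq_top_of_isUnit_mem hyJ (isUnit_of_map_unit f y (hy ▸ isUnit_one))

theorem Ideal.map_map_le_span_singleton {A B : Type*} [CommRing A] [CommRing B]
    {π : A →+* B} (hπ : Function.Surjective π) {φ : A →+* A}
    (hφ : RingHom.ker π ≤ (RingHom.ker π).comap φ) {J : Ideal A} {x : A}
    (hJ : J.map π ≤ Ideal.span {π x}) : (J.map φ).map π ≤ Ideal.span {π (φ x)} := by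
  rw [Ideal.map_map, Ideal.map_le_iff_le_comap]
  intro z hz
  obtain ⟨b, hb⟩ := Ideal.mem_span_singleton'.mp (hJ (Ideal.mem_map_of_mem π hz))
  obtain ⟨h, rfl⟩ := hπ b
  have hker : z - h * x ∈ RingHom.ker π := by
    rw [RingHom.mem_ker, map_sub, map_mul, hb, sub_self]
  have hφker : π (φ z) - π (φ h) * π (φ x) = 0 := by
    simpa using hφ hker
  exact Ideal.mem_span_singleton'.mpr ⟨π (φ h), (sub_eq_zero.mp hφker).symm⟩

theorem PowerSeries.ker_map_eq_span_C {R S : Type*} [CommRing R] [CommRing S] {f : R →+* S}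
    {r : R} (hr : RingHom.ker f = Ideal.span {r}) :
    RingHom.ker (map f) = Ideal.span {C r} := by
  apply le_antisymm
  · intro g hg
    have hdvd (n : ℕ) : r ∣ coeff n g := by
      rw [← Ideal.mem_span_singleton, ← hr, RingHom.mem_ker]
      simpa using congrArg (coeff n) (RingHom.mem_ker.mp hg)
    refine Ideal.mem_span_singleton.mpr ⟨mk fun n => (hdvd n).choose, ext fun n => ?_⟩
    rw [coeff_C_mul, coeff_mk]
    exact (hdvd n).choose_spec
  · have hfr : f r = 0 := RingHom.mem_ker.mp (hr ▸ Ideal.mem_span_singleton_self r)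
    rw [Ideal.span_le, Set.singleton_subset_iff, SetLike.mem_coe, RingHom.mem_ker, map_C, hfr,
      map_zero]

theorem Nat.eq_zero_of_mul_le_add_of_lt {p m c : ℕ} (h : p * m ≤ c + m) (hc : c < p - 1) :
    m = 0 := by
  have : (p - 1) * m < (p - 1) * 1 := by
    rw [Nat.sub_one_mul, mul_one]
    omega
  exact Nat.lt_one_iff.mp (Nat.lt_of_mul_lt_mul_left this)

namespace WittVector

variable (p : ℕ) [Fact p.Prime] {k : Type*} [Field k] [CharP k p] [PerfectField k]

theorem maximalIdeal_eq_span_p :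
    maximalIdeal (WittVector p k) = Ideal.span {(p : WittVector p k)} :=
  (irreducible p).maximalIdeal_eq

theorem ker_map_residue :
    RingHom.ker (PowerSeries.map (residue (WittVector p k))) =
      Ideal.span {(p : (WittVector p k)⟦X⟧)} := by
  rw [ker_map_eq_span_C (by rw [ker_residue, maximalIdeal_eq_span_p]), map_natCast]

theorem ker_map_residue_le_comap (φ : (WittVector p k)⟦X⟧ →+* (WittVector p k)⟦X⟧) :
    RingHom.ker (PowerSeries.map (residue (WittVector p k))) ≤
      (RingHom.ker (PowerSeries.map (residue (WittVector p k)))).comap φ := by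
  rw [ker_map_residue, Ideal.span_le, Set.singleton_subset_iff, SetLike.mem_coe, Ideal.mem_comap,
    map_natCast]
  exact Ideal.mem_span_singleton_self _

theorem map_residue_eisenstein {e : ℕ} {a : ℕ → WittVector p k}
    (ha : ∀ j < e, (p : WittVector p k) ∣ a j) :
    PowerSeries.map (residue (WittVector p k))
      (X ^ e + ∑ j ∈ Finset.range e, C (a j) * X ^ j) = X ^ e := by
  have hres (j : ℕ) (hj : j ∈ Finset.range e) :
      PowerSeries.map (residue (WittVector p k)) (C (a j) * X ^ j) = 0 := by
    rw [map_mul, map_C, (residue_eq_zero_iff _).mpr, map_zero, zero_mul]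
    rw [maximalIdeal_eq_span_p, Ideal.mem_span_singleton]
    exact ha j (Finset.mem_range.mp hj)
  rw [map_add, map_sum, Finset.sum_eq_zero hres, add_zero, map_pow, map_X]

end WittVector

theorem stmt5_general (p : ℕ) [Fact p.Prime] (k : Type*) [Field k] [CharP k p] [PerfectField k]
    (φ : PowerSeries (WittVector p k) →+* PowerSeries (WittVector p k))
    (hφu : φ PowerSeries.X = PowerSeries.X ^ p)
    (e : ℕ) (a : ℕ → WittVector p k)
    (E : PowerSeries (WittVector p k))
    (hE : E = PowerSeries.X ^ e +
      ∑ j ∈ Finset.range e, PowerSeries.C (R := WittVector p k) (a j) * PowerSeries.X ^ j)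
    (haDvd : ∀ j < e, (p : WittVector p k) ∣ a j)
    (i : ℕ)
    (J : Ideal (PowerSeries (WittVector p k)))
    (s : ℕ)
    (hus : (PowerSeries.X : PowerSeries (WittVector p k)) ^ s ∈ J)
    (hJ : ∀ x ∈ J, E ^ (i - 1) * x ∈ Ideal.map φ J)
    (hrange : e * (i - 1) < p - 1) :
    J = ⊤ := by
  set π := map (residue (WittVector p k))
  have hπ : Function.Surjective π := map_surjective _ residue_surjective
  have hπX : π X = X := map_X _
  have hπE : π E = X ^ e := hE ▸ WittVector.map_residue_eisenstein p haDvd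
  have hIbot : J.map π ≠ ⊥ := by
    intro h
    have hXs := h ▸ Ideal.mem_map_of_mem π hus
    rw [Ideal.mem_bot, map_pow, hπX] at hXs
    exact pow_ne_zero s X_ne_zero hXs
  obtain ⟨m, hm⟩ := IsDiscreteValuationRing.ideal_eq_span_pow_irreducible hIbot X_irreducible
  obtain ⟨y, hyJ, hy⟩ := (Ideal.mem_map_iff_of_surjective π hπ).mp
    (hm ▸ Ideal.mem_span_singleton_self (X ^ m))
  have hJm : J.map π ≤ Ideal.span {π (X ^ m)} := by rw [hm, map_pow, hπX]
  have hmem := Ideal.map_map_le_span_singleton hπ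
    (WittVector.ker_map_residue_le_comap p φ) hJm (Ideal.mem_map_of_mem π (hJ y hyJ))
  simp only [map_mul, map_pow, hπE, hy, hφu, hπX, ← pow_mul, ← pow_add] at hmem
  rw [Ideal.mem_span_singleton, pow_dvd_pow_iff X_ne_zero X_irreducible.not_isUnit] at hmem
  obtain rfl : m = 0 := Nat.eq_zero_of_mul_le_add_of_lt hmem hrange
  exact Ideal.eq_top_of_map_eq_top_of_surjective hπ (by rw [hm, pow_zero, Ideal.span_singleton_one])

/-- **Theorem 3.3 (1) (cor control u-torsion), annihilator-ideal core.** With `𝔖`, `φ`, and the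
Eisenstein polynomial `E` of degree `e` as usual: if `i ≥ 1`, `J ⊆ 𝔖` is an ideal containing `u^s`
and `p^N` with `E^{i-1}·J ⊆ φ(J)𝔖`, and `e·(i-1) < p-1`, then `J = 𝔖`. -/
theorem stmt5 (p : ℕ) [Fact p.Prime] (k : Type*) [Field k] [CharP k p] [PerfectField k]
    (φ : PowerSeries (WittVector p k) →+* PowerSeries (WittVector p k))
    (hφu : φ PowerSeries.X = PowerSeries.X ^ p)
    (hφC : ∀ a : WittVector p k,
      φ (PowerSeries.C (R := WittVector p k) a) = PowerSeries.C (R := WittVector p k) (WittVector.frobenius a))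
    (e : ℕ) (he : 1 ≤ e) (a : ℕ → WittVector p k)
    (E : PowerSeries (WittVector p k))
    (hE : E = PowerSeries.X ^ e +
      ∑ j ∈ Finset.range e, PowerSeries.C (R := WittVector p k) (a j) * PowerSeries.X ^ j)
    (haDvd : ∀ j < e, (p : WittVector p k) ∣ a j)
    (ha0 : ¬ ((p : WittVector p k) ^ 2 ∣ a 0))
    (i : ℕ) (hi : 1 ≤ i)
    (J : Ideal (PowerSeries (WittVector p k)))
    (s N : ℕ)
    (hus : (PowerSeries.X : PowerSeries (WittVector p k)) ^ s ∈ J)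
    (hpN : ((p : PowerSeries (WittVector p k)) ^ N) ∈ J)
    (hJ : ∀ x ∈ J, E ^ (i - 1) * x ∈ Ideal.map φ J)
    (hrange : e * (i - 1) < p - 1) :
    J = ⊤ :=
  stmt5_general p k φ hφu e a E hE haDvd i J s hus hJ hrange
end

section
/- Let i ≥ 1 and let J ⊆ 𝔖 be an ideal containing u^s and p^N for some s, N ∈ ℕ, and satisfying E^{i−1}·J ⊆ Ideal.map φ J (the ideal of 𝔖 generated by φ(J)). If e·(i−1) < 2(p−1), then p^{i−1} ∈ J + u𝔖. (This is the annihilator-ideal core of Theorem 'control of u-torsion' part (2): applied to the annihilator of the u^∞-torsion of i-th mod p^n prismatic cohomology it yields Ann + (u) ⊇ (p^{i−1}, u).) -/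
/-!
Let `t` be the least index such that some `z ∈ J` has `p ∤ z_t`; it exists because `u^s ∈ J`.
Modulo `p` we have `E^{i-1} ≡ u^{e(i-1)}`, so the coefficient of `u^{e(i-1)+t}` in `E^{i-1} z` is
`z_t` mod `p`. On the other hand `φ` multiplies exponents by `p`, so every element of `φ(J)𝔖` has
all coefficients of index `< p t` divisible by `p`. As `e(i-1) < 2(p-1)`, for `t ≥ 2` we get
`e(i-1) + t < p t`, a contradiction; hence `t ≤ 1`. If every `z ∈ J` had `p^i ∣ z_0`, the same
argument in degree `1` with `p^i` in place of `p` would give `p^i ∣ a_0^{i-1} z_1`, hence `p ∣ z_1`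
because `a_0` is `p` times a unit, contradicting `t ≤ 1`. So some `z ∈ J` has `z_0 ∣ p^{i-1}`, and
`z ≡ z_0 (mod u)`.
-/

namespace PowerSeries

variable {R : Type*} [CommRing R]

noncomputable def lowCoeffIdeal (I : Ideal R) (n : ℕ) : Ideal R⟦X⟧ :=
  (Ideal.span {X ^ n}).comap (map (Ideal.Quotient.mk I))

theorem mem_lowCoeffIdeal {I : Ideal R} {n : ℕ} {f : R⟦X⟧} :
    f ∈ lowCoeffIdeal I n ↔ ∀ m < n, coeff m f ∈ I := by
  simp only [lowCoeffIdeal, Ideal.mem_comap, Ideal.mem_span_singleton, X_pow_dvd_iff, coeff_map,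
    Ideal.Quotient.eq_zero_iff_mem]

theorem C_mem_lowCoeffIdeal {I : Ideal R} {a : R} (ha : a ∈ I) (n : ℕ) :
    C a ∈ lowCoeffIdeal I n :=
  mem_lowCoeffIdeal.2 fun m _ => by rw [coeff_C]; split_ifs <;> simp [ha]

theorem X_pow_mem_lowCoeffIdeal (I : Ideal R) (n : ℕ) : X ^ n ∈ lowCoeffIdeal I n := by
  rw [lowCoeffIdeal, Ideal.mem_comap, map_pow, map_X]
  exact Ideal.mem_span_singleton_self _

theorem mk_coeff_pow_mul {P : Ideal R} {E : R⟦X⟧} {e : ℕ}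
    (hE : map (Ideal.Quotient.mk P) E = X ^ e) (n m : ℕ) (z : R⟦X⟧) :
    Ideal.Quotient.mk P (coeff (e * n + m) (E ^ n * z)) = Ideal.Quotient.mk P (coeff m z) := by
  rw [← coeff_map, map_mul, map_pow, hE, ← pow_mul, coeff_X_pow_mul', if_pos (Nat.le_add_right _ _),
    Nat.add_sub_cancel_left, coeff_map]

theorem C_mem_sup_span_X {J : Ideal R⟦X⟧} {x : R⟦X⟧} (hx : x ∈ J) {r : R}
    (hr : constantCoeff x ∣ r) : C r ∈ J ⊔ Ideal.span {X} := by
  obtain ⟨c, rfl⟩ := hr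
  have hX : x - C (constantCoeff x) ∈ Ideal.span {X} := by
    rw [Ideal.mem_span_singleton, X_dvd_iff, map_sub, constantCoeff_C, sub_self]
  have hsplit : C (constantCoeff x * c) = C c * x - C c * (x - C (constantCoeff x)) := by
    rw [map_mul]; ring
  rw [hsplit]
  exact Ideal.sub_mem _ (Ideal.mem_sup_left (J.mul_mem_left _ hx))
    (Ideal.mem_sup_right (Ideal.mul_mem_left _ _ hX))

section FrobeniusLift

variable {F : R →+* R} {φ : R⟦X⟧ →+* R⟦X⟧} {q : ℕ}

theorem map_lowCoeffIdeal_le (hφX : φ X = X ^ q) (hφC : ∀ a, φ (C a) = C (F a))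
    {I : Ideal R} (hI : I.map F ≤ I) (n : ℕ) :
    (lowCoeffIdeal I n).map φ ≤ lowCoeffIdeal I (q * n) := by
  rw [Ideal.map_le_iff_le_comap]
  intro f hf
  -- `φ` need not be continuous: it is only known on polynomials and on `X ^ n`.
  rw [Ideal.mem_comap, f.eq_X_pow_mul_shift_add_trunc n, map_add, map_mul, map_pow, hφX, ← pow_mul,
    ← Polynomial.eval₂_C_X_eq_coe, Polynomial.hom_eval₂, eval₂_trunc_eq_sum_range]
  refine Ideal.add_mem _ (Ideal.mul_mem_right _ _ (X_pow_mem_lowCoeffIdeal I _))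
    (Ideal.sum_mem _ fun m hm => Ideal.mul_mem_right _ _ ?_)
  rw [RingHom.comp_apply, hφC]
  exact C_mem_lowCoeffIdeal
    (hI (Ideal.mem_map_of_mem F (mem_lowCoeffIdeal.1 hf m (Finset.mem_range.1 hm)))) _

theorem le_lowCoeffIdeal_succ (hφX : φ X = X ^ q) (hφC : ∀ a, φ (C a) = C (F a))
    {P : Ideal R} (hP : P.map F ≤ P) {E : R⟦X⟧} {e n t : ℕ}
    (hE : map (Ideal.Quotient.mk P) E = X ^ e) {J : Ideal R⟦X⟧}
    (hJ : ∀ x ∈ J, E ^ n * x ∈ J.map φ) (ht : e * n + t < q * t) (h : J ≤ lowCoeffIdeal P t) :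
    J ≤ lowCoeffIdeal P (t + 1) := by
  intro z hz
  rw [mem_lowCoeffIdeal]
  intro m hm
  rcases Nat.lt_succ_iff_lt_or_eq.1 hm with hm | rfl
  · exact mem_lowCoeffIdeal.1 (h hz) m hm
  · have hEz : E ^ n * z ∈ lowCoeffIdeal P (q * m) :=
      map_lowCoeffIdeal_le hφX hφC hP m (Ideal.map_mono h (hJ z hz))
    rw [← Ideal.Quotient.eq_zero_iff_mem, ← mk_coeff_pow_mul hE n, Ideal.Quotient.eq_zero_iff_mem]
    exact mem_lowCoeffIdeal.1 hEz _ ht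

theorem not_le_lowCoeffIdeal_two (hφX : φ X = X ^ q) (hφC : ∀ a, φ (C a) = C (F a))
    {P : Ideal R} (hP : P.map F ≤ P) (hP1 : P ≠ ⊤) {E : R⟦X⟧} {e n : ℕ}
    (hE : map (Ideal.Quotient.mk P) E = X ^ e) {J : Ideal R⟦X⟧}
    (hJ : ∀ x ∈ J, E ^ n * x ∈ J.map φ) {s : ℕ} (hXs : X ^ s ∈ J) (hq : e * n < 2 * (q - 1)) :
    ¬ J ≤ lowCoeffIdeal P 2 := by
  intro h2
  have hle : ∀ t, 2 ≤ t → J ≤ lowCoeffIdeal P t := by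
    refine Nat.le_induction h2 fun t ht ih => le_lowCoeffIdeal_succ hφX hφC hP hE hJ ?_ ih
    obtain ⟨r, rfl⟩ : ∃ r, q = r + 1 := ⟨q - 1, by omega⟩
    rw [Nat.add_sub_cancel] at hq
    nlinarith
  have hs := mem_lowCoeffIdeal.1 (hle (s + 2) (by omega) hXs) s (by omega)
  rw [coeff_X_pow_self] at hs
  exact hP1 ((Ideal.eq_top_iff_one P).2 hs)

theorem le_lowCoeffIdeal_two_of_le_one [IsDomain R] (hφX : φ X = X ^ q)
    (hφC : ∀ a, φ (C a) = C (F a)) (hq : 2 ≤ q) {ϖ b : R} (hϖ : ϖ ≠ 0) (hF : F ϖ = ϖ)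
    (hb : IsUnit b) {E : R⟦X⟧} (hE : constantCoeff E = ϖ * b) {n : ℕ} {J : Ideal R⟦X⟧}
    (hJ : ∀ x ∈ J, E ^ n * x ∈ J.map φ) (h : J ≤ lowCoeffIdeal (Ideal.span {ϖ ^ (n + 1)}) 1) :
    J ≤ lowCoeffIdeal (Ideal.span {ϖ}) 2 := by
  have hI : (Ideal.span {ϖ ^ (n + 1)}).map F ≤ Ideal.span {ϖ ^ (n + 1)} := by
    rw [Ideal.map_span, Set.image_singleton, map_pow, hF]
  intro z hz
  have h0 : ϖ ^ (n + 1) ∣ constantCoeff z := by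
    rw [← coeff_zero_eq_constantCoeff_apply, ← Ideal.mem_span_singleton]
    exact mem_lowCoeffIdeal.1 (h hz) 0 one_pos
  have h1 : ϖ ^ (n + 1) ∣ coeff 1 (E ^ n * z) := Ideal.mem_span_singleton.1 <|
    mem_lowCoeffIdeal.1 (map_lowCoeffIdeal_le hφX hφC hI 1 (Ideal.map_mono h (hJ z hz))) 1 (by omega)
  rw [coeff_one_mul, map_pow constantCoeff, hE, dvd_add_right (dvd_mul_of_dvd_right h0 _)] at h1
  have h1' : ϖ ^ n * ϖ ∣ ϖ ^ n * (coeff 1 z * b ^ n) := by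
    rw [← pow_succ]; convert h1 using 1; ring
  have hz1 : ϖ ∣ coeff 1 z :=
    (hb.pow n).dvd_mul_right.1 ((mul_dvd_mul_iff_left (pow_ne_zero n hϖ)).1 h1')
  rw [mem_lowCoeffIdeal]
  intro m hm
  interval_cases m
  · rw [coeff_zero_eq_constantCoeff_apply, Ideal.mem_span_singleton]
    exact (dvd_pow_self ϖ n.succ_ne_zero).trans h0
  · exact Ideal.mem_span_singleton.2 hz1

end FrobeniusLift

end PowerSeries

namespace IsDiscreteValuationRing

variable {R : Type*} [CommRing R] [IsDomain R] [IsDiscreteValuationRing R] {ϖ : R}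

theorem dvd_pow_of_not_pow_succ_dvd (hϖ : Irreducible ϖ) {w : R} {n : ℕ}
    (h : ¬ ϖ ^ (n + 1) ∣ w) : w ∣ ϖ ^ n := by
  obtain ⟨m, hm⟩ :=
    associated_pow_irreducible (x := w) (fun hw => h (by rw [hw]; exact dvd_zero _)) hϖ
  rw [hm.dvd_iff_dvd_left]
  exact pow_dvd_pow ϖ (not_lt.1 fun hnm => h ((pow_dvd_pow ϖ hnm).trans hm.symm.dvd))

theorem exists_isUnit_eq_mul_of_dvd_of_not_sq_dvd (hϖ : Irreducible ϖ) {a : R} (h1 : ϖ ∣ a)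
    (h2 : ¬ ϖ ^ 2 ∣ a) : ∃ b, IsUnit b ∧ a = ϖ * b := by
  obtain ⟨b, rfl⟩ := h1
  refine ⟨b, ?_, rfl⟩
  rw [← IsLocalRing.notMem_maximalIdeal, hϖ.maximalIdeal_eq, Ideal.mem_span_singleton]
  exact fun hb => h2 (pow_two ϖ ▸ mul_dvd_mul_left ϖ hb)

end IsDiscreteValuationRing

open PowerSeries IsDiscreteValuationRing

theorem stmt6_general (p : ℕ) [Fact p.Prime] (k : Type*) [Field k] [CharP k p] [PerfectField k]
    (φ : PowerSeries (WittVector p k) →+* PowerSeries (WittVector p k))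
    (hφu : φ PowerSeries.X = PowerSeries.X ^ p)
    (hφC : ∀ a : WittVector p k,
      φ (PowerSeries.C (R := WittVector p k) a) = PowerSeries.C (R := WittVector p k) (WittVector.frobenius a))
    (e : ℕ) (he : 1 ≤ e) (a : ℕ → WittVector p k)
    (E : PowerSeries (WittVector p k))
    (hE : E = PowerSeries.X ^ e +
      ∑ j ∈ Finset.range e, PowerSeries.C (R := WittVector p k) (a j) * PowerSeries.X ^ j)
    (haDvd : ∀ j < e, (p : WittVector p k) ∣ a j)
    (ha0 : ¬ ((p : WittVector p k) ^ 2 ∣ a 0))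
    (i : ℕ)
    (J : Ideal (PowerSeries (WittVector p k)))
    (s : ℕ)
    (hus : (PowerSeries.X : PowerSeries (WittVector p k)) ^ s ∈ J)
    (hJ : ∀ x ∈ J, E ^ (i - 1) * x ∈ Ideal.map φ J)
    (hrange : e * (i - 1) < 2 * (p - 1)) :
    ((p : PowerSeries (WittVector p k)) ^ (i - 1)) ∈
      J ⊔ Ideal.span {(PowerSeries.X : PowerSeries (WittVector p k))} := by
  have hp : Irreducible (p : WittVector p k) := WittVector.irreducible p
  have hFp : WittVector.frobenius (p : WittVector p k) = p := map_natCast _ _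
  obtain ⟨b, hb, ha0b⟩ := exists_isUnit_eq_mul_of_dvd_of_not_sq_dvd hp (haDvd 0 he) ha0
  have hE0 : constantCoeff E = p * b := by
    rw [← ha0b, hE, map_add, map_pow, constantCoeff_X, zero_pow (by omega), zero_add, map_sum,
      Finset.sum_eq_single_of_mem 0 (Finset.mem_range.2 he)]
    · simp
    · intro j _ hj
      simp [hj]
  have hEmod : map (Ideal.Quotient.mk (Ideal.span {(p : WittVector p k)})) E = X ^ e := by
    rw [hE, map_add, map_pow, map_X, map_sum, add_eq_left]
    refine Finset.sum_eq_zero fun j hj => ?_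
    rw [map_mul, map_C, Ideal.Quotient.eq_zero_iff_mem.2
      (Ideal.mem_span_singleton.2 (haDvd j (Finset.mem_range.1 hj))), map_zero, zero_mul]
  have hFspan : (Ideal.span {(p : WittVector p k)}).map WittVector.frobenius ≤
      Ideal.span {(p : WittVector p k)} := by
    rw [Ideal.map_span, Set.image_singleton, hFp]
  obtain ⟨x, hxJ, hx⟩ : ∃ x ∈ J, ¬ (p : WittVector p k) ^ (i - 1 + 1) ∣ constantCoeff x := by
    by_contra! h
    refine not_le_lowCoeffIdeal_two hφu hφC hFspan (Ideal.span_singleton_ne_top hp.not_isUnit)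
      hEmod hJ hus hrange (le_lowCoeffIdeal_two_of_le_one hφu hφC (Nat.Prime.two_le Fact.out)
        hp.ne_zero hFp hb hE0 hJ fun z hz => mem_lowCoeffIdeal.2 fun m hm => ?_)
    rw [Nat.lt_one_iff.1 hm, coeff_zero_eq_constantCoeff_apply, Ideal.mem_span_singleton]
    exact h z hz
  rw [← map_natCast C, ← map_pow]
  exact C_mem_sup_span_X hxJ (dvd_pow_of_not_pow_succ_dvd hp hx)

/-- **Theorem 3.3 (2) (cor control u-torsion), annihilator-ideal core.** With `𝔖`, `φ`, and the
Eisenstein polynomial `E` of degree `e` as usual: if `i ≥ 1`, `J ⊆ 𝔖` is an ideal containing `u^s`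
and `p^N` with `E^{i-1}·J ⊆ φ(J)𝔖`, and `e·(i-1) < 2(p-1)`, then `p^{i-1} ∈ J + (u)`. -/
theorem stmt6 (p : ℕ) [Fact p.Prime] (k : Type*) [Field k] [CharP k p] [PerfectField k]
    (φ : PowerSeries (WittVector p k) →+* PowerSeries (WittVector p k))
    (hφu : φ PowerSeries.X = PowerSeries.X ^ p)
    (hφC : ∀ a : WittVector p k,
      φ (PowerSeries.C (R := WittVector p k) a) = PowerSeries.C (R := WittVector p k) (WittVector.frobenius a))
    (e : ℕ) (he : 1 ≤ e) (a : ℕ → WittVector p k)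
    (E : PowerSeries (WittVector p k))
    (hE : E = PowerSeries.X ^ e +
      ∑ j ∈ Finset.range e, PowerSeries.C (R := WittVector p k) (a j) * PowerSeries.X ^ j)
    (haDvd : ∀ j < e, (p : WittVector p k) ∣ a j)
    (ha0 : ¬ ((p : WittVector p k) ^ 2 ∣ a 0))
    (i : ℕ) (hi : 1 ≤ i)
    (J : Ideal (PowerSeries (WittVector p k)))
    (s N : ℕ)
    (hus : (PowerSeries.X : PowerSeries (WittVector p k)) ^ s ∈ J)
    (hpN : ((p : PowerSeries (WittVector p k)) ^ N) ∈ J)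
    (hJ : ∀ x ∈ J, E ^ (i - 1) * x ∈ Ideal.map φ J)
    (hrange : e * (i - 1) < 2 * (p - 1)) :
    ((p : PowerSeries (WittVector p k)) ^ (i - 1)) ∈
      J ⊔ Ideal.span {(PowerSeries.X : PowerSeries (WittVector p k))} :=
  stmt6_general p k φ hφu hφC e he a E hE haDvd ha0 i J s hus hJ hrange
end

section
/- Let i ≥ 1 and let J ⊆ 𝔖 be an ideal containing u^s and p^N for some s, N ∈ ℕ, and satisfying E^{i−1}·J ⊆ Ideal.map φ J (the ideal of 𝔖 generated by φ(J)). If e·(i−1) = p−1, then u ∈ J and p ∈ J. (This is the annihilator-ideal core of Theorem 'control of u-torsion' part (3): applied to the annihilator of the u^∞-torsion of i-th mod p^n prismatic cohomology it shows that this torsion module is killed by (p,u).) -/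
/-!
`𝔖` is free over `φ(𝔖)` with basis `1, u, …, u^{p-1}`, so `x ∈ φ(J)𝔖` exactly when each of the
`p` "digits" `x_j` in `x = ∑ φ(x_j) u^j` lies in `J`. Reading off digits shows that the
condition `E^q J ⊆ φ(J)𝔖` (`q = i - 1`) passes from `J` to the colon ideal `(J : (p, u))`;
as `(p, u)^n ⊆ J` for some `n`, induction on `n` reduces to the case `(p, u)^2 ⊆ J`.
There, with `E = u^e + T`, `p ∣ T` and `d = p - 1 - e`, one has
`E^q ≡ u^{p-1} + q u^d T (mod p²)`. The digit of index `1` of `E^q u²` is thus `u` modulo `p²`,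
so `u ∈ J`; the digit of index `d + 1` of `E^q u` is `q F⁻¹(a₀) + p²(…)`, which is `p` times a
unit because `p² ∤ a₀`, so `p ∈ J`.
-/

open PowerSeries

theorem exists_add_pow_eq_of_dvd {R : Type*} [CommRing R] {π y : R} (x : R) (h : π ∣ y) (n : ℕ) :
    ∃ r, (x + y) ^ n = x ^ n + n * x ^ (n - 1) * y + π ^ 2 * r := by
  obtain ⟨r, hr⟩ := (pow_dvd_pow_of_dvd h 2).trans (sq_dvd_add_pow_sub_sub y x n)
  exact ⟨r, by linear_combination hr⟩

namespace Ideal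

variable {R : Type*} [CommRing R]

theorem mem_colon_pair {J : Ideal R} {a b x : R} :
    x ∈ J.colon {a, b} ↔ x * a ∈ J ∧ x * b ∈ J := by
  simp [Submodule.mem_colon]

theorem le_of_pow_le_of_colon {I : Ideal R} (P : Ideal R → Prop)
    (hcolon : ∀ J, P J → P (J.colon I)) (hsq : ∀ J, P J → I ^ 2 ≤ J → I ≤ J) (n : ℕ) :
    ∀ J, P J → I ^ n ≤ J → I ≤ J := by
  induction n with
  | zero => exact fun J _ h ↦ le_top.trans (by simpa using h)
  | succ n ih =>
    intro J hJ hn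
    have hcol : I ≤ J.colon I := ih _ (hcolon J hJ) fun r hr ↦
      Submodule.mem_colon.2 fun s hs ↦ hn (pow_succ I n ▸ mul_mem_mul hr hs)
    exact hsq J hJ (sq I ▸ Submodule.mul_le.2 fun r hr s hs ↦ Submodule.mem_colon.1 (hcol hr) s hs)

end Ideal

namespace WittVector

variable {p : ℕ} [Fact p.Prime] {k : Type*} [Field k] [CharP k p] [PerfectRing k p]

theorem isUnit_iff_not_p_dvd (x : WittVector p k) : IsUnit x ↔ ¬ (p : WittVector p k) ∣ x := by
  rw [← IsLocalRing.notMem_maximalIdeal,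
    (IsDiscreteValuationRing.irreducible_iff_uniformizer _).1 (irreducible p),
    Ideal.mem_span_singleton]

theorem isUnit_natCast {n : ℕ} (hn : ¬ p ∣ n) : IsUnit (n : WittVector p k) := by
  refine (isUnit_iff_not_p_dvd _).2 fun h ↦ hn ?_
  have := map_dvd (constantCoeff : WittVector p k →+* k) h
  rwa [map_natCast, map_natCast, CharP.cast_eq_zero, zero_dvd_iff, CharP.cast_eq_zero_iff k p]
    at this

end WittVector

namespace PowerSeries

variable {A : Type*} [CommRing A]

def IsFrobeniusLift (p : ℕ) (σ : A ≃+* A) (φ : A⟦X⟧ →+* A⟦X⟧) : Prop :=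
  φ X = X ^ p ∧ ∀ a, φ (C a) = C (σ a)

/-- The coefficients of `x` at exponents `≡ j (mod p)`, untwisted by `σ`, so that
`x = ∑_{j<p} φ (digit p σ j x) * X ^ j` for a Frobenius lift `φ` over `σ`. -/
noncomputable def digit (p : ℕ) (σ : A ≃+* A) (j : ℕ) : A⟦X⟧ →+ A⟦X⟧ where
  toFun x := mk fun b ↦ σ.symm (coeff (p * b + j) x)
  map_zero' := by ext; simp
  map_add' x y := by ext; simp

theorem coeff_sum_C_mul_X_pow (a : ℕ → A) (e n : ℕ) :
    coeff n (∑ j ∈ Finset.range e, C (a j) * X ^ j) = if n < e then a n else 0 := by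
  simp

theorem natCast_dvd_sum_C_mul_X_pow {m e : ℕ} {a : ℕ → A} (ha : ∀ j < e, (m : A) ∣ a j) :
    (m : A⟦X⟧) ∣ ∑ j ∈ Finset.range e, C (a j) * X ^ j :=
  Finset.dvd_sum fun j hj ↦ dvd_mul_of_dvd_left
    (map_natCast (C (R := A)) m ▸ map_dvd C (ha j (Finset.mem_range.1 hj))) _

theorem exists_X_pow_add_pow_eq {p e q : ℕ} {T : A⟦X⟧} (hT : (p : A⟦X⟧) ∣ T) (hp : 1 < p)
    (heq : e * q = p - 1) :
    ∃ d R, d + e + 1 = p ∧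
      (X ^ e + T) ^ q = X ^ (p - 1) + (q : A⟦X⟧) * X ^ d * T + (p : A⟦X⟧) ^ 2 * R := by
  have hq : 1 ≤ q := Nat.pos_of_ne_zero fun h ↦ by simp [h] at heq; omega
  obtain ⟨R, hR⟩ := exists_add_pow_eq_of_dvd (X ^ e) hT q
  refine ⟨e * (q - 1), R, ?_, by rw [hR, ← pow_mul, ← pow_mul, heq]⟩
  have := Nat.le_mul_of_pos_right e hq
  rw [Nat.mul_sub_one]
  omega

variable {p : ℕ} {σ : A ≃+* A}

theorem coeff_digit (j b : ℕ) (x : A⟦X⟧) :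
    coeff b (digit p σ j x) = σ.symm (coeff (p * b + j) x) :=
  coeff_mk b (fun b ↦ σ.symm (coeff (p * b + j) x))

theorem digit_X_pow (hp : 0 < p) (j m : ℕ) : digit p σ j (X ^ (p * m + j)) = X ^ m := by
  ext b
  simp [coeff_digit, coeff_X_pow, hp.ne']

theorem digit_succ_X_mul (j : ℕ) (x : A⟦X⟧) : digit p σ (j + 1) (X * x) = digit p σ j x := by
  ext b
  rw [coeff_digit, coeff_digit, ← add_assoc, coeff_succ_X_mul]

theorem digit_zero_X_mul (hp : 0 < p) (x : A⟦X⟧) :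
    digit p σ 0 (X * x) = X * digit p σ (p - 1) x := by
  ext b
  rcases b with _ | b
  · simp [coeff_digit]
  · rw [coeff_digit, coeff_succ_X_mul, coeff_digit,
      show p * (b + 1) + 0 = p * b + (p - 1) + 1 by rw [Nat.mul_succ]; omega, coeff_succ_X_mul]

theorem digit_X_pow_mul_mem (hp : 0 < p) {J : Ideal A⟦X⟧} {x : A⟦X⟧}
    (hx : ∀ j < p, digit p σ j x ∈ J) (m : ℕ) : ∀ j < p, digit p σ j (X ^ m * x) ∈ J := by
  induction m with
  | zero => simpa using hx
  | succ m ih =>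
    intro j hj
    rw [pow_succ', mul_assoc]
    rcases j with _ | j
    · rw [digit_zero_X_mul hp]
      exact J.mul_mem_left _ (ih _ (by omega))
    · rw [digit_succ_X_mul]
      exact ih j (by omega)

namespace IsFrobeniusLift

variable {φ : A⟦X⟧ →+* A⟦X⟧}

theorem map_trunc (hφ : IsFrobeniusLift p σ φ) (n : ℕ) (x : A⟦X⟧) :
    φ (trunc n x) = ∑ i ∈ Finset.range n, C (σ (coeff i x)) * X ^ (p * i) := by
  rw [← Polynomial.eval₂_C_X_eq_coe, Polynomial.hom_eval₂, eval₂_trunc_eq_sum_range]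
  simp only [RingHom.coe_comp, Function.comp_apply, hφ.1, hφ.2, pow_mul]

theorem coeff_apply (hφ : IsFrobeniusLift p σ φ) (hp : 0 < p) (x : A⟦X⟧) (n : ℕ) :
    coeff n (φ x) = if p ∣ n then σ (coeff (n / p) x) else 0 := by
  have htrunc : coeff n (φ x) = coeff n (φ (trunc (n + 1) x)) := by
    conv_lhs => rw [eq_X_pow_mul_shift_add_trunc (n + 1) x]
    rw [map_add, map_mul, map_pow, hφ.1, ← pow_mul, map_add, coeff_X_pow_mul',
      if_neg (by nlinarith), zero_add]
  rw [htrunc, hφ.map_trunc, map_sum]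
  simp only [coeff_C_mul_X_pow]
  split_ifs with h
  · obtain ⟨c, rfl⟩ := h
    rw [Finset.sum_eq_single c]
    · simp [hp.ne']
    · intro i _ hi
      rw [if_neg (fun h ↦ hi (Nat.eq_of_mul_eq_mul_left hp h).symm)]
    · intro hc
      exact absurd (Finset.mem_range.2 (by nlinarith)) hc
  · exact Finset.sum_eq_zero fun i _ ↦ if_neg fun hi ↦ h ⟨i, hi⟩

theorem coeff_sum_map_mul_X_pow (hφ : IsFrobeniusLift p σ φ) (hp : 0 < p) (z : ℕ → A⟦X⟧)
    (b : ℕ) {r : ℕ} (hr : r < p) :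
    coeff (p * b + r) (∑ j ∈ Finset.range p, φ (z j) * X ^ j) = σ (coeff b (z r)) := by
  rw [map_sum, Finset.sum_eq_single r]
  · rw [coeff_mul_X_pow', if_pos (by omega), Nat.add_sub_cancel, hφ.coeff_apply hp,
      if_pos (dvd_mul_right p b), Nat.mul_div_cancel_left b hp]
  · intro j hj hjr
    rw [coeff_mul_X_pow']
    split_ifs with hle
    · rw [hφ.coeff_apply hp, if_neg]
      rintro ⟨c, hc⟩
      have hmod := congrArg (· % p) (show p * c + j = p * b + r by omega)
      simp only [Nat.mul_add_mod, Nat.mod_eq_of_lt hr, Nat.mod_eq_of_lt (Finset.mem_range.1 hj)]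
        at hmod
      exact hjr hmod
    · rfl
  · exact fun h ↦ absurd (Finset.mem_range.2 hr) h

theorem sum_digit (hφ : IsFrobeniusLift p σ φ) (hp : 0 < p) (x : A⟦X⟧) :
    ∑ j ∈ Finset.range p, φ (digit p σ j x) * X ^ j = x := by
  ext n
  obtain ⟨b, r, hr, rfl⟩ : ∃ b r, r < p ∧ p * b + r = n :=
    ⟨n / p, n % p, Nat.mod_lt n hp, Nat.div_add_mod n p⟩
  rw [hφ.coeff_sum_map_mul_X_pow hp _ b hr, coeff_digit, σ.apply_symm_apply]

theorem digit_eq_of_sum_eq (hφ : IsFrobeniusLift p σ φ) (hp : 0 < p) {z : ℕ → A⟦X⟧}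
    {x : A⟦X⟧} (hx : ∑ j ∈ Finset.range p, φ (z j) * X ^ j = x) {r : ℕ} (hr : r < p) :
    digit p σ r x = z r := by
  ext b
  rw [coeff_digit, ← hx, hφ.coeff_sum_map_mul_X_pow hp z b hr, σ.symm_apply_apply]

theorem digit_map_mul (hφ : IsFrobeniusLift p σ φ) (hp : 0 < p) (s x : A⟦X⟧) {j : ℕ}
    (hj : j < p) : digit p σ j (φ s * x) = s * digit p σ j x := by
  refine hφ.digit_eq_of_sum_eq hp (z := fun j ↦ s * digit p σ j x) ?_ hj
  conv_rhs => rw [← hφ.sum_digit hp x, Finset.mul_sum]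
  simp only [map_mul, mul_assoc]

theorem digit_natCast_mul (hφ : IsFrobeniusLift p σ φ) (hp : 0 < p) (n : ℕ) (x : A⟦X⟧)
    {j : ℕ} (hj : j < p) : digit p σ j (n * x) = n * digit p σ j x := by
  simpa using hφ.digit_map_mul hp n x hj

theorem digit_map (hφ : IsFrobeniusLift p σ φ) (hp : 0 < p) (y : A⟦X⟧) {j : ℕ} (hj : j < p) :
    digit p σ j (φ y) = if j = 0 then y else 0 := by
  refine hφ.digit_eq_of_sum_eq hp (z := fun j ↦ if j = 0 then y else 0) ?_ hj
  rw [Finset.sum_eq_single 0 (fun j _ hj ↦ by simp [hj]) (by simp [hp])]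
  simp

theorem mem_map_iff (hφ : IsFrobeniusLift p σ φ) (hp : 0 < p) {J : Ideal A⟦X⟧} {x : A⟦X⟧} :
    x ∈ J.map φ ↔ ∀ j < p, digit p σ j x ∈ J := by
  refine ⟨fun hx ↦ ?_, fun hx ↦ ?_⟩
  · induction hx using Submodule.span_induction with
    | mem y hy =>
      obtain ⟨y, hy, rfl⟩ := hy
      intro j hj
      rw [hφ.digit_map hp y hj]
      split_ifs
      exacts [hy, J.zero_mem]
    | zero => simp
    | add x y _ _ hx hy => exact fun j hj ↦ by rw [map_add]; exact J.add_mem (hx j hj) (hy j hj)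
    | smul r x _ hx =>
      intro j hj
      rw [smul_eq_mul, ← hφ.sum_digit hp r, Finset.sum_mul, map_sum]
      refine J.sum_mem fun i _ ↦ ?_
      rw [mul_assoc, hφ.digit_map_mul hp _ _ hj]
      exact J.mul_mem_left _ (digit_X_pow_mul_mem hp hx i j hj)
  · rw [← hφ.sum_digit hp x]
    exact Ideal.sum_mem _ fun j hj ↦
      Ideal.mul_mem_right _ _ (Ideal.mem_map_of_mem φ (hx j (Finset.mem_range.1 hj)))

theorem mul_mem_map_colon (hφ : IsFrobeniusLift p σ φ) (hp : 0 < p) {c : A⟦X⟧}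
    {J : Ideal A⟦X⟧} (hJ : ∀ x ∈ J, c * x ∈ J.map φ) :
    ∀ x ∈ J.colon {(p : A⟦X⟧), X}, c * x ∈ (J.colon {(p : A⟦X⟧), X}).map φ := by
  intro x hx
  rw [Ideal.mem_colon_pair] at hx
  have hdp := (hφ.mem_map_iff hp).1 (hJ _ hx.1)
  have hdX := (hφ.mem_map_iff hp).1 (hJ _ hx.2)
  refine (hφ.mem_map_iff hp).2 fun j hj ↦ Ideal.mem_colon_pair.2 ⟨?_, ?_⟩
  · have h := hdp j hj
    rwa [show c * (x * p) = p * (c * x) by ring, hφ.digit_natCast_mul hp _ _ hj, mul_comm] at h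
  · rcases Nat.lt_or_ge (j + 1) p with hjp | hjp
    · have h := hdX (j + 1) hjp
      rw [show c * (x * X) = X * (c * x) by ring, digit_succ_X_mul] at h
      exact J.mul_mem_right _ h
    · have h := hdX 0 hp
      rwa [show c * (x * X) = X * (c * x) by ring, digit_zero_X_mul hp, mul_comm,
        show p - 1 = j by omega] at h

variable {e q : ℕ} {a : ℕ → A} {E : A⟦X⟧} {J : Ideal A⟦X⟧}

theorem X_mem_of_sq_mem (hφ : IsFrobeniusLift p σ φ) (hp : 1 < p)
    (hE : E = X ^ e + ∑ j ∈ Finset.range e, C (a j) * X ^ j) (ha : ∀ j < e, (p : A) ∣ a j)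
    (heq : e * q = p - 1) (hJ : ∀ x ∈ J, E ^ q * x ∈ J.map φ) (hX2 : X ^ 2 ∈ J)
    (hp2 : (p : A⟦X⟧) ^ 2 ∈ J) : X ∈ J := by
  obtain ⟨d, R, hd, hR⟩ := exists_X_pow_add_pow_eq (natCast_dvd_sum_C_mul_X_pow ha) hp heq
  rw [← hE] at hR
  have hexp : E ^ q * X ^ 2 = X ^ (p * 1 + 1)
      + (q : A⟦X⟧) * (X ^ (d + 2) * ∑ j ∈ Finset.range e, C (a j) * X ^ j)
      + (p : A⟦X⟧) ^ 2 * (R * X ^ 2) := by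
    rw [hR, show p * 1 + 1 = p - 1 + 2 by omega]
    ring
  have htail : digit p σ 1 (X ^ (d + 2) * ∑ j ∈ Finset.range e, C (a j) * X ^ j) = 0 := by
    ext b
    rw [coeff_digit, coeff_X_pow_mul', map_zero]
    split_ifs with h
    · rcases Nat.eq_zero_or_pos b with rfl | hb
      · omega
      have := Nat.le_mul_of_pos_right p hb
      rw [coeff_sum_C_mul_X_pow, if_neg (by omega), map_zero]
    · exact map_zero _
  have hdig := (hφ.mem_map_iff (by omega)).1 (hJ _ hX2) 1 hp
  rw [hexp, map_add, map_add, hφ.digit_natCast_mul (by omega) _ _ hp, ← Nat.cast_pow,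
    hφ.digit_natCast_mul (by omega) _ _ hp, digit_X_pow (by omega), htail, pow_one, mul_zero,
    add_zero, Nat.cast_pow] at hdig
  have h := J.sub_mem hdig (J.mul_mem_right (digit p σ 1 (R * X ^ 2)) hp2)
  rwa [add_sub_cancel_right] at h

end IsFrobeniusLift

end PowerSeries

namespace PowerSeries.IsFrobeniusLift

variable {p : ℕ} [Fact p.Prime] {k : Type*} [Field k] [CharP k p] [PerfectRing k p]
  {φ : (WittVector p k)⟦X⟧ →+* (WittVector p k)⟦X⟧} {e q : ℕ} {a : ℕ → WittVector p k}
  {E : (WittVector p k)⟦X⟧} {J : Ideal (WittVector p k)⟦X⟧}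

theorem p_mem_of_X_mem (hφ : IsFrobeniusLift p (WittVector.frobeniusEquiv p k) φ)
    (hE : E = X ^ e + ∑ j ∈ Finset.range e, C (a j) * X ^ j)
    (ha : ∀ j < e, (p : WittVector p k) ∣ a j) (ha0 : ¬ (p : WittVector p k) ^ 2 ∣ a 0)
    (heq : e * q = p - 1) (hJ : ∀ x ∈ J, E ^ q * x ∈ J.map φ) (hX : X ∈ J) :
    (p : (WittVector p k)⟦X⟧) ∈ J := by
  set σ := WittVector.frobeniusEquiv p k
  have hp := (Fact.out : p.Prime).one_lt
  have he : 0 < e := Nat.pos_of_ne_zero fun h ↦ by simp [h] at heq; omega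
  have hq : 0 < q := Nat.pos_of_ne_zero fun h ↦ by simp [h] at heq; omega
  obtain ⟨d, R, hd, hR⟩ := exists_X_pow_add_pow_eq (natCast_dvd_sum_C_mul_X_pow ha) hp heq
  rw [← hE] at hR
  have hexp : E ^ q * X = X ^ (p * 1 + 0)
      + (q : (WittVector p k)⟦X⟧) * (X ^ (d + 1) * ∑ j ∈ Finset.range e, C (a j) * X ^ j)
      + (p : (WittVector p k)⟦X⟧) ^ 2 * (R * X) := by
    rw [hR, show p * 1 + 0 = p - 1 + 1 by omega]
    ring
  have hlead : digit p σ (d + 1) (X ^ (p * 1 + 0)) = 0 := by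
    ext b
    rw [coeff_digit, coeff_X_pow, if_neg, map_zero, map_zero]
    rcases Nat.eq_zero_or_pos b with rfl | hb
    · omega
    · have := Nat.le_mul_of_pos_right p hb
      omega
  have htail : digit p σ (d + 1) (X ^ (d + 1) * ∑ j ∈ Finset.range e, C (a j) * X ^ j)
      = C (σ.symm (a 0)) := by
    ext b
    rw [coeff_digit, coeff_X_pow_mul', if_pos (by omega), Nat.add_sub_cancel,
      coeff_sum_C_mul_X_pow, coeff_C]
    rcases Nat.eq_zero_or_pos b with rfl | hb
    · simp [he]
    · have := Nat.le_mul_of_pos_right p hb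
      rw [if_neg (by omega), if_neg (by omega), map_zero]
  have hdig := (hφ.mem_map_iff (by omega)).1 (hJ _ hX) (d + 1) (by omega)
  rw [hexp, map_add, map_add, hφ.digit_natCast_mul (by omega) _ _ (by omega), ← Nat.cast_pow,
    hφ.digit_natCast_mul (by omega) _ _ (by omega), hlead, htail, zero_add, Nat.cast_pow] at hdig
  set Z := digit p σ (d + 1) (R * X)
  obtain ⟨g, hg⟩ := ha 0 he
  have hunit : IsUnit (C ((q : WittVector p k) * σ.symm g) + p * Z) := by
    rw [isUnit_iff_constantCoeff]
    simp only [map_add, map_mul, constantCoeff_C, map_natCast]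
    refine (WittVector.isUnit_iff_not_p_dvd _).2 fun h ↦ ha0 ?_
    have hqu := WittVector.isUnit_natCast (p := p) (k := k) fun h ↦ by
      have := Nat.le_of_dvd hq h
      have := Nat.le_mul_of_pos_left q he
      omega
    obtain ⟨c, hc⟩ := map_dvd σ ((hqu.dvd_mul_left).1 ((dvd_add_left (dvd_mul_right _ _)).1 h))
    rw [map_natCast, σ.apply_symm_apply] at hc
    exact ⟨c, by rw [hg, hc]; ring⟩
  refine (J.mul_unit_mem_iff_mem hunit).1 ?_
  convert hdig using 1
  simp only [hg, map_mul, map_natCast]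
  ring

theorem span_le_of_sq_le (hφ : IsFrobeniusLift p (WittVector.frobeniusEquiv p k) φ)
    (hE : E = X ^ e + ∑ j ∈ Finset.range e, C (a j) * X ^ j)
    (ha : ∀ j < e, (p : WittVector p k) ∣ a j) (ha0 : ¬ (p : WittVector p k) ^ 2 ∣ a 0)
    (heq : e * q = p - 1) (hJ : ∀ x ∈ J, E ^ q * x ∈ J.map φ)
    (hsq : Ideal.span {(p : (WittVector p k)⟦X⟧), X} ^ 2 ≤ J) :
    Ideal.span {(p : (WittVector p k)⟦X⟧), X} ≤ J := by
  have hX := hφ.X_mem_of_sq_mem (Fact.out : p.Prime).one_lt hE ha heq hJ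
    (hsq (Ideal.pow_mem_pow (Ideal.subset_span (by simp)) 2))
    (hsq (Ideal.pow_mem_pow (Ideal.subset_span (by simp)) 2))
  rw [Ideal.span_le, Set.insert_subset_iff, Set.singleton_subset_iff]
  exact ⟨hφ.p_mem_of_X_mem hE ha ha0 heq hJ hX, hX⟩

end PowerSeries.IsFrobeniusLift

theorem stmt7_general (p : ℕ) [Fact p.Prime] (k : Type*) [Field k] [CharP k p] [PerfectField k]
    (φ : PowerSeries (WittVector p k) →+* PowerSeries (WittVector p k))
    (hφu : φ PowerSeries.X = PowerSeries.X ^ p)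
    (hφC : ∀ a : WittVector p k,
      φ (PowerSeries.C a) = PowerSeries.C (WittVector.frobenius a))
    (e : ℕ) (a : ℕ → WittVector p k)
    (E : PowerSeries (WittVector p k))
    (hE : E = PowerSeries.X ^ e +
      ∑ j ∈ Finset.range e, PowerSeries.C (a j) * PowerSeries.X ^ j)
    (haDvd : ∀ j < e, (p : WittVector p k) ∣ a j)
    (ha0 : ¬ ((p : WittVector p k) ^ 2 ∣ a 0))
    (i : ℕ)
    (J : Ideal (PowerSeries (WittVector p k)))
    (s N : ℕ)
    (hus : (PowerSeries.X : PowerSeries (WittVector p k)) ^ s ∈ J)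
    (hpN : ((p : PowerSeries (WittVector p k)) ^ N) ∈ J)
    (hJ : ∀ x ∈ J, E ^ (i - 1) * x ∈ Ideal.map φ J)
    (hrange : e * (i - 1) = p - 1) :
    (PowerSeries.X : PowerSeries (WittVector p k)) ∈ J ∧ (p : PowerSeries (WittVector p k)) ∈ J := by
  have hφ : IsFrobeniusLift p (WittVector.frobeniusEquiv p k) φ :=
    ⟨hφu, fun a ↦ by rw [hφC, WittVector.frobeniusEquiv_apply]⟩
  set I := Ideal.span {(p : (WittVector p k)⟦X⟧), X}
  obtain ⟨M, hM⟩ : ∃ M, I ^ M ≤ J := Ideal.exists_pow_le_of_le_radical_of_fg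
    (by
      rw [Ideal.span_le, Set.insert_subset_iff, Set.singleton_subset_iff]
      exact ⟨⟨N, hpN⟩, s, hus⟩)
    (Submodule.fg_span (Set.toFinite _))
  have hIJ : I ≤ J := Ideal.le_of_pow_le_of_colon
    (fun J : Ideal (WittVector p k)⟦X⟧ ↦ ∀ x ∈ J, E ^ (i - 1) * x ∈ J.map φ)
    (fun J hJ ↦ by
      rw [Ideal.colon_span]
      exact hφ.mul_mem_map_colon (Fact.out : p.Prime).pos hJ)
    (fun J hJ ↦ hφ.span_le_of_sq_le hE haDvd ha0 hrange hJ) M J hJ hM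
  exact ⟨hIJ (Ideal.subset_span (by simp)), hIJ (Ideal.subset_span (by simp))⟩

/-- **Theorem 3.3 (3) (cor control u-torsion), annihilator-ideal core.** With `𝔖`, `φ`, and the
Eisenstein polynomial `E` of degree `e` as usual: if `i ≥ 1`, `J ⊆ 𝔖` is an ideal containing `u^s`
and `p^N` with `E^{i-1}·J ⊆ φ(J)𝔖`, and `e·(i-1) = p-1`, then `u ∈ J` and `p ∈ J`. -/
theorem stmt7 (p : ℕ) [Fact p.Prime] (k : Type*) [Field k] [CharP k p] [PerfectField k]
    (φ : PowerSeries (WittVector p k) →+* PowerSeries (WittVector p k))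
    (hφu : φ PowerSeries.X = PowerSeries.X ^ p)
    (hφC : ∀ a : WittVector p k,
      φ (PowerSeries.C a) = PowerSeries.C (WittVector.frobenius a))
    (e : ℕ) (he : 1 ≤ e) (a : ℕ → WittVector p k)
    (E : PowerSeries (WittVector p k))
    (hE : E = PowerSeries.X ^ e +
      ∑ j ∈ Finset.range e, PowerSeries.C (a j) * PowerSeries.X ^ j)
    (haDvd : ∀ j < e, (p : WittVector p k) ∣ a j)
    (ha0 : ¬ ((p : WittVector p k) ^ 2 ∣ a 0))
    (i : ℕ) (hi : 1 ≤ i)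
    (J : Ideal (PowerSeries (WittVector p k)))
    (s N : ℕ)
    (hus : (PowerSeries.X : PowerSeries (WittVector p k)) ^ s ∈ J)
    (hpN : ((p : PowerSeries (WittVector p k)) ^ N) ∈ J)
    (hJ : ∀ x ∈ J, E ^ (i - 1) * x ∈ Ideal.map φ J)
    (hrange : e * (i - 1) = p - 1) :
    (PowerSeries.X : PowerSeries (WittVector p k)) ∈ J ∧ (p : PowerSeries (WittVector p k)) ∈ J :=
  stmt7_general p k φ hφu hφC e a E hE haDvd ha0 i J s N hus hpN hJ hrange
end

section
/- Let M be a finitely generated 𝔖-module such that (i) the torsion submodule of M is killed by p^N for some N ∈ ℕ, and (ii) the quotient M/uM is p-torsion free (for x ∈ M/uM, p·x = 0 implies x = 0). Then M is a free 𝔖-module. (This is the module-theoretic content of Remark 3.6: if the crystalline cohomology H^i_cris(X_0/W) is torsion free, then the Breuil–Kisin prismatic cohomology H^i_Δ(X/𝔖) is a free 𝔖-module.) -/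
/-!
`𝔖` acts on `M / uM` through `u ↦ 0`, so `M / uM` is a finitely generated `W(k)`-module; it has
no `p`-torsion, hence is free because `W(k)` is a DVR with uniformizer `p`. Lift a basis to
`x : ι → M`. Since `u` lies in the Jacobson radical of `𝔖`, Nakayama's lemma shows that the
`xᵢ` generate `M`. If `u ^ t` kills `∑ fᵢ xᵢ`, this element is torsion, hence killed by `p ^ N`,
hence lies in `uM` as `M / uM` has no `p`-torsion; so every `fᵢ(0) = 0`, i.e. `fᵢ = u gᵢ`, and
`u ^ (t + 1)` kills `∑ gᵢ xᵢ`. Iterating, a relation `∑ fᵢ xᵢ = 0` has all `fᵢ` divisible by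
every power of `u`, so the `xᵢ` are linearly independent.
-/

open PowerSeries Pointwise

theorem IsDiscreteValuationRing.isTorsionFree_of_isSMulRegular {R Q : Type*} [CommRing R]
    [IsDomain R] [IsDiscreteValuationRing R] [AddCommGroup Q] [Module R Q] {ϖ : R}
    (hϖ : Irreducible ϖ) (hreg : IsSMulRegular Q ϖ) : Module.IsTorsionFree R Q where
  isSMulRegular r hr := by
    obtain ⟨n, u, rfl⟩ := eq_unit_mul_pow_irreducible hr.ne_zero hϖ
    exact (u.isSMulRegular Q).mul (hreg.pow n)

namespace PowerSeries

variable {A M : Type*} [CommRing A]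

theorem X_mem_jacobson_bot : (X : A⟦X⟧) ∈ Ideal.jacobson ⊥ :=
  Ideal.mem_jacobson_bot.2 fun y => by simp [isUnit_iff_constantCoeff]

theorem eq_zero_of_forall_X_pow_dvd {f : A⟦X⟧} (h : ∀ n, (X : A⟦X⟧) ^ n ∣ f) : f = 0 :=
  ext fun n => X_pow_dvd_iff.1 (h (n + 1)) n n.lt_succ_self

variable [AddCommGroup M] [Module A⟦X⟧ M]

local notation "XM" => (X : A⟦X⟧) • (⊤ : Submodule A⟦X⟧ M)

theorem mem_X_smul_top {m : M} : m ∈ XM ↔ ∃ y : M, m = (X : A⟦X⟧) • y := by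
  simp [Submodule.mem_smul_pointwise_iff_exists, eq_comm]

variable [Module A M] [IsScalarTower A A⟦X⟧ M]

theorem smul_quotient_X_eq_constantCoeff_smul (r : A⟦X⟧) (q : M ⧸ XM) :
    r • q = constantCoeff r • q := by
  obtain ⟨m, rfl⟩ := Submodule.mkQ_surjective _ q
  obtain ⟨s, hs⟩ : X ∣ r - C (constantCoeff r) := by simp [X_dvd_iff]
  rw [Submodule.mkQ_apply, ← Submodule.Quotient.mk_smul, ← Submodule.Quotient.mk_smul,
    Submodule.Quotient.eq, ← algebraMap_smul A⟦X⟧ (constantCoeff r) m, ← sub_smul]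
  exact mem_X_smul_top.2 ⟨s • m, by rw [smul_smul, ← hs]; rfl⟩

theorem restrictScalars_span_quotient_X (s : Set (M ⧸ XM)) :
    (Submodule.span A⟦X⟧ s).restrictScalars A = Submodule.span A s := by
  refine le_antisymm ?_ (Submodule.span_le_restrictScalars A A⟦X⟧ s)
  let S : Submodule A⟦X⟧ (M ⧸ XM) :=
    { Submodule.span A s with
      smul_mem' := fun r q hq => by
        rw [smul_quotient_X_eq_constantCoeff_smul]
        exact Submodule.smul_mem _ _ hq }
  exact fun q hq => (Submodule.span_le.2 Submodule.subset_span : Submodule.span A⟦X⟧ s ≤ S) hq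

instance finite_quotient_X [Module.Finite A⟦X⟧ M] : Module.Finite A (M ⧸ XM) := by
  obtain ⟨s, hs⟩ := Module.Finite.fg_top (R := A⟦X⟧) (M := M ⧸ XM)
  refine ⟨⟨s, ?_⟩⟩
  rw [← restrictScalars_span_quotient_X, hs, Submodule.restrictScalars_top]

theorem isSMulRegular_quotient_X {a : A} (ha : ∀ m : M, a • m ∈ XM → m ∈ XM) :
    IsSMulRegular (M ⧸ XM) a := by
  refine IsSMulRegular.of_right_eq_zero_of_smul fun q hq => ?_
  obtain ⟨m, rfl⟩ := Submodule.mkQ_surjective _ q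
  rw [← LinearMap.map_smul_of_tower, Submodule.mkQ_apply, Submodule.Quotient.mk_eq_zero] at hq
  exact (Submodule.Quotient.mk_eq_zero _).2 (ha m hq)

theorem mem_X_smul_top_of_smul_eq_zero {a : A} (ha : IsSMulRegular (M ⧸ XM) a) {n : ℕ} {m : M}
    (hm : a ^ n • m = 0) : m ∈ XM := by
  rw [← Submodule.Quotient.mk_eq_zero]
  refine (ha.pow n).right_eq_zero_of_smul ?_
  rw [← Submodule.Quotient.mk_smul, hm, Submodule.Quotient.mk_zero]

variable {ι : Type*} {b : Module.Basis ι A (M ⧸ (X : A⟦X⟧) • (⊤ : Submodule A⟦X⟧ M))}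
  {x : ι → M}

theorem span_range_eq_top_of_mkQ_basis [Module.Finite A⟦X⟧ M]
    (hx : ∀ i, Submodule.mkQ XM (x i) = b i) :
    Submodule.span A⟦X⟧ (Set.range x) = ⊤ := by
  refine top_le_iff.1 (Submodule.le_of_le_smul_of_le_jacobson_bot (I := Ideal.span {X})
    Module.Finite.fg_top ((Ideal.span_singleton_le_iff_mem _).2 X_mem_jacobson_bot) ?_)
  rw [Submodule.ideal_span_singleton_smul, sup_comm, top_le_iff, ← Submodule.map_mkQ_eq_top,
    Submodule.map_span, ← Set.range_comp, show Submodule.mkQ XM ∘ x = b from funext hx,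
    ← Submodule.restrictScalars_eq_top_iff A, restrictScalars_span_quotient_X, b.span_eq]

theorem X_dvd_of_X_pow_smul_sum_eq_zero [Fintype ι] (hx : ∀ i, Submodule.mkQ XM (x i) = b i)
    (htors : ∀ (t : ℕ) (m : M), (X : A⟦X⟧) ^ t • m = 0 → m ∈ XM)
    {f : ι → A⟦X⟧} {t : ℕ} (h : (X : A⟦X⟧) ^ t • ∑ i, f i • x i = 0) (i : ι) : X ∣ f i := by
  have h0 := (Submodule.Quotient.mk_eq_zero _).2 (htors t _ h)
  rw [← Submodule.mkQ_apply, map_sum] at h0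
  simp_rw [map_smul, hx, smul_quotient_X_eq_constantCoeff_smul] at h0
  exact X_dvd_iff.2 (Fintype.linearIndependent_iff.1 b.linearIndependent _ h0 i)

theorem X_pow_dvd_of_X_pow_smul_sum_eq_zero [Fintype ι] (hx : ∀ i, Submodule.mkQ XM (x i) = b i)
    (htors : ∀ (t : ℕ) (m : M), (X : A⟦X⟧) ^ t • m = 0 → m ∈ XM) (n : ℕ)
    {f : ι → A⟦X⟧} {t : ℕ} (h : (X : A⟦X⟧) ^ t • ∑ i, f i • x i = 0) (i : ι) :
    X ^ n ∣ f i := by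
  induction n generalizing f t with
  | zero => exact one_dvd _
  | succ n ih =>
    choose g hg using X_dvd_of_X_pow_smul_sum_eq_zero hx htors h
    have hg' : (X : A⟦X⟧) ^ (t + 1) • ∑ i, g i • x i = 0 := by
      rw [pow_succ, mul_smul, Finset.smul_sum]
      simp_rw [smul_smul, ← hg]
      exact h
    rw [hg i, pow_succ']
    exact mul_dvd_mul_left X (ih hg')

theorem linearIndependent_of_mkQ_basis [Fintype ι] (hx : ∀ i, Submodule.mkQ XM (x i) = b i)
    (htors : ∀ (t : ℕ) (m : M), (X : A⟦X⟧) ^ t • m = 0 → m ∈ XM) :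
    LinearIndependent A⟦X⟧ x :=
  Fintype.linearIndependent_iff.2 fun f hf i => eq_zero_of_forall_X_pow_dvd fun n =>
    X_pow_dvd_of_X_pow_smul_sum_eq_zero hx htors n (t := 0) (by rw [pow_zero, one_smul, hf]) i

theorem free_of_free_quotient_X [Module.Finite A⟦X⟧ M] [Module.Free A (M ⧸ XM)]
    (htors : ∀ (t : ℕ) (m : M), (X : A⟦X⟧) ^ t • m = 0 → m ∈ XM) :
    Module.Free A⟦X⟧ M := by
  let b := Module.Free.chooseBasis A (M ⧸ XM)
  choose x hx using fun i => Submodule.mkQ_surjective XM (b i)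
  exact Module.Free.of_basis <| Module.Basis.mk (linearIndependent_of_mkQ_basis hx htors)
    (span_range_eq_top_of_mkQ_basis hx).ge

end PowerSeries

/-- **Remark 3.6 (finite free follows from crystalline torsion free), module-theoretic content.**
Let `M` be a finitely generated `𝔖`-module (`𝔖 = W(k)⟦u⟧`) whose torsion submodule is killed by
`p^N` for some `N`, and such that `M/uM` is `p`-torsion free.  Then `M` is a free `𝔖`-module. -/
theorem stmt8 (p : ℕ) [Fact p.Prime] (k : Type*) [Field k] [CharP k p] [PerfectField k]
    (M : Type*) [AddCommGroup M] [Module (PowerSeries (WittVector p k)) M]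
    [Module.Finite (PowerSeries (WittVector p k)) M]
    (N : ℕ)
    (htor : ∀ x : M, (∃ f : PowerSeries (WittVector p k), f ≠ 0 ∧ f • x = 0) →
      ((p : PowerSeries (WittVector p k)) ^ N) • x = 0)
    (hquot : ∀ x : M,
      (∃ y : M, (p : PowerSeries (WittVector p k)) • x =
        (PowerSeries.X : PowerSeries (WittVector p k)) • y) →
      ∃ y : M, x = (PowerSeries.X : PowerSeries (WittVector p k)) • y) :
    Module.Free (PowerSeries (WittVector p k)) M := by
  have : PerfectRing k p := PerfectField.toPerfectRing p
  let : Module (WittVector p k) M := Module.compHom M (C (R := WittVector p k))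
  have : IsScalarTower (WittVector p k) (PowerSeries (WittVector p k)) M :=
    IsScalarTower.of_algebraMap_smul fun _ _ => rfl
  have hp : IsSMulRegular (M ⧸ (X : PowerSeries (WittVector p k)) • ⊤) (p : WittVector p k) :=
    isSMulRegular_quotient_X fun m hm => by
      rw [Nat.cast_smul_eq_nsmul, ← Nat.cast_smul_eq_nsmul (PowerSeries (WittVector p k))] at hm
      exact mem_X_smul_top.2 (hquot m (mem_X_smul_top.1 hm))
  have := IsDiscreteValuationRing.isTorsionFree_of_isSMulRegular (WittVector.irreducible p) hp
  exact free_of_free_quotient_X fun t m hm => mem_X_smul_top_of_smul_eq_zero hp (n := N) <| by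
    rw [← algebraMap_smul (PowerSeries (WittVector p k)), map_pow, map_natCast]
    exact htor m ⟨X ^ t, pow_ne_zero t X_ne_zero, hm⟩
end

section
/- Let M be a finitely generated W(k)-module and F ⊆ M a submodule such that for every n ≥ 1 the induced map F/p^nF → M/p^nM is injective (equivalently, F ∩ p^n·M = p^n·F for all n ≥ 1). Then F is a direct summand of M: there exists a W(k)-submodule G ⊆ M with F ⊕ G = M (IsCompl F G). -/
/-!
Purity of `F` says exactly that every `p^n`-torsion element of `M ⧸ F` lifts to a `p^n`-torsion
element of `M`. By the structure theorem, `M ⧸ F` is a free module times a direct sum of cyclic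
modules `W(k) ⧸ (π ^ e)` with `π` associated to `p`; the free part lifts by projectivity and each
cyclic summand lifts by sending its generator to a torsion lift. This gives a section of
`M → M ⧸ F`, whose range is a complement of `F`.
-/

open LinearMap DirectSum

section Lifting

variable {R : Type*} [CommRing R] {M N : Type*} [AddCommGroup M] [Module R M]
  [AddCommGroup N] [Module R N] (q : M →ₗ[R] N)

theorem Submodule.exists_isCompl_of_mkQ_comp_eq_id (F : Submodule R M) (s : M ⧸ F →ₗ[R] M)
    (hs : F.mkQ ∘ₗ s = LinearMap.id) : ∃ G : Submodule R M, IsCompl F G := by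
  have hidem : IsIdempotentElem (s ∘ₗ F.mkQ) := by
    rw [IsIdempotentElem, Module.End.mul_eq_comp, comp_assoc, ← comp_assoc F.mkQ, hs, id_comp]
  have hker : ker (s ∘ₗ F.mkQ) = F := by
    have hs_inj : ker s = ⊥ := ker_eq_bot_of_inverse hs
    rw [ker_comp_of_ker_eq_bot _ hs_inj, Submodule.ker_mkQ]
  have hcompl := hidem.isCompl.symm
  rw [hker] at hcompl
  exact ⟨_, hcompl⟩

theorem Submodule.exists_mkQ_eq_and_smul_eq_zero {F : Submodule R M} {a : R}
    (hF : ∀ x ∈ F, (∃ y : M, x = a • y) → ∃ y ∈ F, x = a • y) {ν : M ⧸ F} (hν : a • ν = 0) :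
    ∃ m : M, F.mkQ m = ν ∧ a • m = 0 := by
  obtain ⟨x, rfl⟩ := F.mkQ_surjective ν
  have hax : a • x ∈ F := by
    rwa [← map_smul, Submodule.mkQ_apply, Submodule.Quotient.mk_eq_zero] at hν
  obtain ⟨y, hyF, hy⟩ := hF _ hax ⟨x, rfl⟩
  refine ⟨x - y, ?_, by rw [smul_sub, ← hy, sub_self]⟩
  rw [map_sub, Submodule.mkQ_apply F y, (Submodule.Quotient.mk_eq_zero F).mpr hyF, sub_zero]

theorem exists_comp_eq_of_quotient_span_singleton {a : R}
    (hlift : ∀ ν : N, a • ν = 0 → ∃ m : M, q m = ν ∧ a • m = 0) (g : (R ⧸ R ∙ a) →ₗ[R] N) :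
    ∃ t : (R ⧸ R ∙ a) →ₗ[R] M, q ∘ₗ t = g := by
  have hg : a • g (Submodule.Quotient.mk 1) = 0 := by
    rw [← map_smul, ← Submodule.Quotient.mk_smul, smul_eq_mul, mul_one,
      (Submodule.Quotient.mk_eq_zero _).mpr (Submodule.mem_span_singleton_self a), map_zero]
  obtain ⟨m, hqm, ham⟩ := hlift _ hg
  refine ⟨Submodule.liftQSpanSingleton a (toSpanSingleton R M m) ham, ?_⟩
  refine Submodule.linearMap_qext _ (ext_ring ?_)
  change q (toSpanSingleton R M m 1) = _
  rwa [toSpanSingleton_apply, one_smul]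

theorem exists_comp_eq_of_directSum {ι : Type*} [DecidableEq ι] {D : ι → Type*}
    [∀ i, AddCommGroup (D i)] [∀ i, Module R (D i)] (g : (⨁ i, D i) →ₗ[R] N)
    (hg : ∀ i, ∃ t : D i →ₗ[R] M, q ∘ₗ t = g ∘ₗ lof R ι D i) :
    ∃ t : (⨁ i, D i) →ₗ[R] M, q ∘ₗ t = g := by
  choose t ht using hg
  refine ⟨toModule R ι M t, linearMap_ext _ fun i => ext fun x => ?_⟩
  simpa only [comp_apply, toModule_lof] using LinearMap.congr_fun (ht i) x

theorem exists_comp_eq_of_prod {P Q : Type*} [AddCommGroup P] [Module R P] [AddCommGroup Q]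
    [Module R Q] (g : P × Q →ₗ[R] N) (hP : ∃ t : P →ₗ[R] M, q ∘ₗ t = g ∘ₗ inl R P Q)
    (hQ : ∃ t : Q →ₗ[R] M, q ∘ₗ t = g ∘ₗ inr R P Q) :
    ∃ t : P × Q →ₗ[R] M, q ∘ₗ t = g := by
  obtain ⟨tP, htP⟩ := hP
  obtain ⟨tQ, htQ⟩ := hQ
  refine ⟨tP.coprod tQ, ?_⟩
  rw [comp_coprod, htP, htQ, ← comp_coprod, coprod_inl_inr, comp_id]

theorem exists_comp_eq_id_of_lift_torsion [IsDomain R] [IsPrincipalIdealRing R]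
    [Module.Finite R N] (hq : Function.Surjective q)
    (hlift : ∀ π : R, Irreducible π → ∀ (e : ℕ) (ν : N), π ^ e • ν = 0 →
      ∃ m : M, q m = ν ∧ π ^ e • m = 0) :
    ∃ s : N →ₗ[R] M, q ∘ₗ s = LinearMap.id := by
  classical
  obtain ⟨n, ι, _, π, hπ, e, ⟨ψ⟩⟩ := Module.equiv_free_prod_directSum R N
  obtain ⟨t, ht⟩ : ∃ t, q ∘ₗ t = ψ.symm.toLinearMap := by
    refine exists_comp_eq_of_prod q _ (Module.projective_lifting_property q _ hq) ?_
    refine exists_comp_eq_of_directSum q _ fun i => ?_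
    exact exists_comp_eq_of_quotient_span_singleton q (hlift (π i) (hπ i) (e i)) _
  refine ⟨t ∘ₗ ψ.toLinearMap, ?_⟩
  rw [← comp_assoc, ht, LinearEquiv.symm_comp]

end Lifting

theorem Associated.smul_eq_zero_iff {R M : Type*} [CommMonoid R] [AddMonoid M]
    [DistribMulAction R M] {a b : R} (hab : Associated a b) {x : M} :
    a • x = 0 ↔ b • x = 0 := by
  obtain ⟨u, rfl⟩ := hab
  rw [mul_comm, mul_smul, u.isUnit.smul_eq_zero]

theorem IsDiscreteValuationRing.exists_isCompl_of_pure {R : Type*} [CommRing R] [IsDomain R]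
    [IsDiscreteValuationRing R] {ϖ : R} (hϖ : Irreducible ϖ) {M : Type*} [AddCommGroup M]
    [Module R M] [Module.Finite R M] (F : Submodule R M)
    (hF : ∀ n : ℕ, 1 ≤ n → ∀ x ∈ F, (∃ y : M, x = ϖ ^ n • y) → ∃ y ∈ F, x = ϖ ^ n • y) :
    ∃ G : Submodule R M, IsCompl F G := by
  have hpure : ∀ n : ℕ, ∀ x ∈ F, (∃ y : M, x = ϖ ^ n • y) → ∃ y ∈ F, x = ϖ ^ n • y := by
    rintro (_ | n) x hx hxy
    · exact ⟨x, hx, by rw [pow_zero, one_smul]⟩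
    · exact hF _ n.succ_pos x hx hxy
  obtain ⟨s, hs⟩ := exists_comp_eq_id_of_lift_torsion F.mkQ F.mkQ_surjective
    fun π hπ e ν hν => by
      have hassoc : Associated (π ^ e) (ϖ ^ e) :=
        (associated_of_irreducible R hπ hϖ).pow_pow
      simp_rw [hassoc.smul_eq_zero_iff] at hν ⊢
      exact F.exists_mkQ_eq_and_smul_eq_zero (hpure e) hν
  exact F.exists_isCompl_of_mkQ_comp_eq_id s hs

/-- **Lemma 4.11 (split filtration lemma).** Let `F ⊆ M` be an inclusion of finitely generated
`W(k)`-modules.  If the induced maps `F/p^nF → M/p^nM` are injective for all `n ≥ 1`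
(equivalently, `F ∩ p^n·M = p^n·F` for all `n ≥ 1`), then `F` is a direct summand of `M`. -/
theorem stmt9 (p : ℕ) [Fact p.Prime] (k : Type*) [Field k] [CharP k p] [PerfectField k]
    (M : Type*) [AddCommGroup M] [Module (WittVector p k) M] [Module.Finite (WittVector p k) M]
    (F : Submodule (WittVector p k) M)
    (h : ∀ n : ℕ, 1 ≤ n → ∀ x ∈ F,
      (∃ y : M, x = ((p : WittVector p k) ^ n) • y) →
      ∃ y ∈ F, x = ((p : WittVector p k) ^ n) • y) :
    ∃ G : Submodule (WittVector p k) M, IsCompl F G :=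
  have := WittVector.isDiscreteValuationRing (p := p) (k := k)
  IsDiscreteValuationRing.exists_isCompl_of_pure (WittVector.irreducible p) F h
end

section
/- Let k be a field, let n ≥ 0 and m > 1 be integers, and let a : Fin n → Fin n → k. Let h : MvPolynomial (Fin n) k →ₐ[k] MvPolynomial (Fin n) k be the k-algebra endomorphism determined by h(X_i) = X_i^m + Σ_{j} C(a i j)·X_j for each i. Then h is a finite ring homomorphism, i.e. MvPolynomial (Fin n) k is a finitely generated module over itself via h (geometrically: the corresponding endomorphism of affine n-space 𝔸^n_k is a finite morphism). -/
/-!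
Modulo the image of `h`, the variable power `X i ^ m` can be replaced by
`X i ^ m - h (X i)`, a polynomial of degree `< m`. Hence every monomial with some exponent `≥ m`
is, over the image of `h`, a combination of polynomials of smaller total degree, and induction on
the total degree shows that the finitely many monomials with all exponents `< m` generate
`k[X_0, …, X_{n-1}]` as a module over the image of `h`.
-/

open MvPolynomial

namespace MvPolynomial

variable {R σ : Type*} [CommRing R]

theorem monomial_eq_X_pow_mul_monomial_sub {β : σ →₀ ℕ} {i : σ} {m : ℕ} (hi : m ≤ β i) (r : R) :
    monomial β r = X i ^ m * monomial (β - Finsupp.single i m) r := by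
  rw [mul_comm, ← monomial_add_single, tsub_add_cancel_of_le (Finsupp.single_le_iff.mpr hi)]

theorem degree_sub_single_add {β : σ →₀ ℕ} {i : σ} {m : ℕ} (hi : m ≤ β i) :
    (β - Finsupp.single i m).degree + m = β.degree := by
  conv_rhs => rw [← tsub_add_cancel_of_le (Finsupp.single_le_iff.mpr hi)]
  rw [map_add, Finsupp.degree_single]

theorem mem_span_monomial_one_of_totalDegree_sub_X_pow_lt
    (B : Subalgebra R (MvPolynomial σ R)) {m : ℕ}
    (hB : ∀ i, ∃ b ∈ B, (b - X i ^ m).totalDegree < m) (p : MvPolynomial σ R) :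
    p ∈ Submodule.span B ((fun β : σ →₀ ℕ => monomial β (1 : R)) '' {β | ∀ i, β i < m}) := by
  set M := Submodule.span B ((fun β : σ →₀ ℕ => monomial β (1 : R)) '' {β | ∀ i, β i < m})
  induction hd : p.totalDegree using Nat.strong_induction_on generalizing p with
  | _ d ih =>
  have mem_of_lt : ∀ q : MvPolynomial σ R, q.totalDegree < d → q ∈ M := fun q hq => ih _ hq q rfl
  have monomial_mem : ∀ β : σ →₀ ℕ, β.degree ≤ d → monomial β 1 ∈ M := by
    intro β hβ
    by_cases hsmall : ∀ i, β i < m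
    · exact Submodule.subset_span ⟨β, hsmall, rfl⟩
    push Not at hsmall
    obtain ⟨i, hi⟩ := hsmall
    obtain ⟨b, hbB, hb⟩ := hB i
    set γ := β - Finsupp.single i m
    have hγ : γ.degree + m = β.degree := degree_sub_single_add hi
    have hγM : monomial γ (1 : R) ∈ M := mem_of_lt _ <| by
      grw [totalDegree_monomial_le]
      change γ.degree < d
      omega
    have hrestM : (b - X i ^ m) * monomial γ 1 ∈ M := mem_of_lt _ <| by
      grw [totalDegree_mul, totalDegree_monomial_le]
      change _ + γ.degree < d
      omega
    have hsplit : monomial β (1 : R) = b * monomial γ 1 - (b - X i ^ m) * monomial γ 1 := by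
      rw [monomial_eq_X_pow_mul_monomial_sub hi]
      ring
    rw [hsplit]
    exact sub_mem (Submodule.smul_mem M ⟨b, hbB⟩ hγM) hrestM
  rw [p.as_sum]
  refine Submodule.sum_mem M fun β hβ => ?_
  rw [← mul_one (coeff β p), ← C_mul_monomial]
  exact Submodule.smul_mem M (algebraMap R B (coeff β p)) (monomial_mem β (hd ▸ le_totalDegree hβ))

theorem module_finite_of_totalDegree_sub_X_pow_lt [Finite σ]
    (B : Subalgebra R (MvPolynomial σ R)) {m : ℕ}
    (hB : ∀ i, ∃ b ∈ B, (b - X i ^ m).totalDegree < m) : Module.Finite B (MvPolynomial σ R) := by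
  classical
  have hfin : {β : σ →₀ ℕ | ∀ i, β i < m}.Finite :=
    (Set.finite_Iic (Finsupp.equivFunOnFinite.symm fun _ => m)).subset fun β hβ i => (hβ i).le
  refine ⟨Submodule.fg_def.mpr ⟨_, hfin.image fun β => monomial β (1 : R), ?_⟩⟩
  exact eq_top_iff.mpr fun p _ => mem_span_monomial_one_of_totalDegree_sub_X_pow_lt B hB p

theorem algHom_finite_of_totalDegree_sub_X_pow_lt [Finite σ]
    (h : MvPolynomial σ R →ₐ[R] MvPolynomial σ R) {m : ℕ}
    (hh : ∀ i, (h (X i) - X i ^ m).totalDegree < m) : h.Finite := by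
  have : Module.Finite h.range (MvPolynomial σ R) :=
    module_finite_of_totalDegree_sub_X_pow_lt h.range fun i => ⟨_, h.mem_range_self _, hh i⟩
  rw [← h.val_comp_rangeRestrict]
  exact .comp (RingHom.finite_algebraMap.mpr this) (.of_surjective _ h.rangeRestrict_surjective)

end MvPolynomial

/-- **Lemma 5.14.** Let `k` be a field, `m > 1`, and `(a i j)` an `n × n` matrix over `k`.  The
`k`-algebra endomorphism `h` of `k[X_0, …, X_{n-1}]` with `h(X_i) = X_i^m + Σ_j a i j · X_j` is a
finite ring homomorphism (geometrically: the corresponding endomorphism of `𝔸^n_k` is finite). -/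
theorem stmt10 (k : Type*) [Field k] (n m : ℕ) (hm : 1 < m) (a : Fin n → Fin n → k)
    (h : MvPolynomial (Fin n) k →ₐ[k] MvPolynomial (Fin n) k)
    (hh : ∀ i : Fin n, h (MvPolynomial.X i) =
      MvPolynomial.X i ^ m + ∑ j : Fin n, MvPolynomial.C (a i j) * MvPolynomial.X j) :
    RingHom.Finite h.toRingHom := by
  refine algHom_finite_of_totalDegree_sub_X_pow_lt h (m := m) fun i => ?_
  rw [hh i, add_sub_cancel_left]
  refine (totalDegree_finsetSum_le fun j _ => ?_).trans_lt hm
  exact (totalDegree_mul _ _).trans (by simp)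
end

section
/- Let p be a prime and n ≥ 1 an integer. Then in the polynomial ring ℤ[X] one has the congruence (X+1)^{p^n} ≡ (X^p+1)^{p^{n−1}} modulo p^n; that is, every coefficient of (X+1)^{p^n} − (X^p+1)^{p^{n−1}} is divisible by p^n (equivalently, the images of (X+1)^{p^n} and (X^p+1)^{p^{n−1}} in (ZMod p^n)[X] coincide). -/
open Polynomial in
lemma base_dvd (p : ℕ) (hp : p.Prime) :
    (p : ℤ[X]) ∣ (X + 1) ^ p - (X ^ p + 1) := by
  have : (p : ℤ[X]) = C (p : ℤ) := by simp
  rw [this, C_dvd_iff_dvd_coeff]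
  intro i
  rw [coeff_sub, coeff_X_add_one_pow]
  rcases eq_or_ne i 0 with rfl | h0
  · simp [Nat.choose_zero_right, coeff_X_pow, hp.pos.ne]
  rcases eq_or_ne i p with rfl | hip
  · simp [coeff_X_pow, coeff_one, hp.ne_zero, Nat.choose_self]
  · have : (X ^ p + 1 : ℤ[X]).coeff i = 0 := by
      simp [coeff_X_pow, coeff_one, h0, hip]
    rw [this, sub_zero]
    rcases lt_or_ge i p with hip' | hip'
    · exact_mod_cast Int.natCast_dvd_natCast.2
        (hp.dvd_choose_self h0 hip')
    · rw [Nat.choose_eq_zero_of_lt (lt_of_le_of_ne hip' (Ne.symm hip))]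
      simp

/-- The congruence `(X+1)^{p^n} ≡ (X^p+1)^{p^{n-1}} (mod p^n)` in `ℤ[X]`: every coefficient of
the difference is divisible by `p^n`.  (Used in the proof of Lemma 6.7 of the paper.) -/
theorem stmt13 (p : ℕ) (hp : p.Prime) (n : ℕ) (hn : 1 ≤ n) :
    ∀ m : ℕ, ((p : ℤ) ^ n) ∣
      (((Polynomial.X + 1) ^ p ^ n -
        (Polynomial.X ^ p + 1) ^ p ^ (n - 1) : Polynomial ℤ)).coeff m := by
  intro m
  open Polynomial in
  have key : ((p : ℤ[X]) ^ ((n - 1) + 1)) ∣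
      ((X + 1) ^ p) ^ p ^ (n - 1) - (X ^ p + 1) ^ p ^ (n - 1) :=
    dvd_sub_pow_of_dvd_sub (base_dvd p hp) (n - 1)
  have hn' : n - 1 + 1 = n := Nat.succ_pred_eq_of_pos hn
  rw [← pow_mul, ← pow_succ', hn'] at key
  have : ((p : Polynomial ℤ) ^ n) = Polynomial.C ((p : ℤ) ^ n) := by simp [Polynomial.C_pow]
  rw [this, Polynomial.C_dvd_iff_dvd_coeff] at key
  exact key m
end

section
/- Let k be an algebraically closed field of characteristic p, let n ≥ 1, and set q := (1+u)^{p^{n−1}} − 1 ∈ 𝔖 and d := Σ_{i=0}^{p−1} (1+u)^{i·p^{n−1}} ∈ 𝔖 (so that d·q = (1+u)^{p^n} − 1; d is the Eisenstein polynomial of ζ_{p^n} − 1). Then for every m with 1 ≤ m ≤ n, the kernel of the additive endomorphism x ↦ φ(x) − d·x of 𝔖/p^m𝔖 (well defined since φ(p^m𝔖) ⊆ p^m𝔖) is exactly the cyclic subgroup generated by the class of q, and this subgroup is isomorphic to ℤ/p^m (the class of q has additive order p^m). Equivalently there is an exact sequence 0 → (ℤ/p^m)·q → 𝔖/p^m →^{φ−d}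 𝔖/p^m. -/
/-!
Reducing coefficients modulo `p` maps `𝔖` onto `k⟦u⟧`; because `k` is perfect its kernel is
`p𝔖`, and it turns `φ` into the `p`-th power map. As `q ↦ u^{p^{n-1}}` and
`d ↦ u^{(p-1)p^{n-1}}`, a class in the kernel of `φ - d` on `𝔖/p` reduces to some `y` with
`y^p = u^{(p-1)p^{n-1}} y`; comparing `u`-adic orders forces `y = c u^{p^{n-1}}` with `c ∈ 𝔽_p`,
i.e. the class of `c q`. Since `φ(1+u) ≡ (1+u)^p` mod `p`, raising to the power `p^{n-1}` gives
`φ(q) ≡ d q` mod `p^n`, and a dévissage along `p^m𝔖 ⊇ p^{m+1}𝔖` (`p` is a non-zero-divisor)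
carries the description of the kernel from `m = 1` up to `m = n`. Finally `q ∉ p𝔖`, so its class
modulo `p^m` has order exactly `p^m`.
-/

open PowerSeries

namespace PowerSeries

instance instCharP {R : Type*} [Semiring R] (p : ℕ) [CharP R p] : CharP R⟦X⟧ p :=
  charP_of_injective_ringHom C_injective p

theorem C_dvd_iff_s14 {R : Type*} [CommSemiring R] {a : R} {f : R⟦X⟧} :
    C a ∣ f ↔ ∀ n, a ∣ coeff n f := by
  refine ⟨fun ⟨g, hg⟩ n ↦ ⟨coeff n g, by rw [hg, coeff_C_mul]⟩, fun h ↦ ?_⟩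
  exact ⟨mk fun n ↦ (h n).choose, ext fun n ↦ by rw [coeff_C_mul, coeff_mk, ← (h n).choose_spec]⟩

theorem map_eq_zero_iff_C_dvd {R S : Type*} [CommRing R] [Semiring S] {f : R →+* S} {a : R}
    (hf : RingHom.ker f = Ideal.span {a}) {g : R⟦X⟧} : map f g = 0 ↔ C a ∣ g := by
  rw [C_dvd_iff_s14, PowerSeries.ext_iff]
  simp only [coeff_map, map_zero, ← RingHom.mem_ker, hf, Ideal.mem_span_singleton]

section RingHomExt

variable {R S : Type*} [CommSemiring R] [CommSemiring S]

theorem coeff_apply_eq_coeff_apply_trunc {ψ : R⟦X⟧ →+* S⟦X⟧} (hψ : X ∣ ψ X) (f : R⟦X⟧) (n : ℕ) :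
    coeff n (ψ f) = coeff n (ψ (trunc (n + 1) f)) := by
  conv_lhs => rw [eq_X_pow_mul_shift_add_trunc (n + 1) f]
  have hdvd : X ^ (n + 1) ∣ ψ (X ^ (n + 1) * mk fun i ↦ coeff (i + (n + 1)) f) := by
    rw [map_mul, map_pow]
    exact (pow_dvd_pow_of_dvd hψ _).mul_right _
  rw [map_add, map_add, X_pow_dvd_iff.mp hdvd n n.lt_succ_self, zero_add]

theorem ringHom_ext_of_X_dvd {ψ₁ ψ₂ : R⟦X⟧ →+* S⟦X⟧} (hC : ∀ a, ψ₁ (C a) = ψ₂ (C a))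
    (hX : ψ₁ X = ψ₂ X) (hdvd : X ∣ ψ₁ X) : ψ₁ = ψ₂ := by
  have hpoly : ψ₁.comp Polynomial.coeToPowerSeries.ringHom =
      ψ₂.comp Polynomial.coeToPowerSeries.ringHom :=
    Polynomial.ringHom_ext (by simpa using hC) (by simpa using hX)
  have hdvd₂ : X ∣ ψ₂ X := hX ▸ hdvd
  refine RingHom.ext fun f ↦ ext fun n ↦ ?_
  rw [coeff_apply_eq_coeff_apply_trunc hdvd, coeff_apply_eq_coeff_apply_trunc hdvd₂]
  exact congrArg (coeff n) (RingHom.congr_fun hpoly (trunc (n + 1) f))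

end RingHomExt

theorem eq_zero_of_pow_eq_self {R : Type*} [CommRing R] {n : ℕ} (hn : 2 ≤ n) {f : R⟦X⟧}
    (hf : f ^ n = f) (hf0 : constantCoeff f = 0) : f = 0 := by
  have hunit : IsUnit (1 - f ^ (n - 1)) :=
    isUnit_iff_constantCoeff.mpr (by simp [hf0, zero_pow (show n - 1 ≠ 0 by omega)])
  refine hunit.mul_left_eq_zero.mp ?_
  rw [mul_sub, mul_one, ← pow_succ', Nat.sub_add_cancel (by omega), hf, sub_self]

end PowerSeries

theorem exists_natCast_eq_of_pow_eq_self {F : Type*} [Field F] (p : ℕ) [Fact p.Prime] [CharP F p]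
    {x : F} (hx : x ^ p = x) : ∃ i : ℕ, (i : F) = x := by
  rw [← Subfield.mem_bot_iff_pow_eq_self F p, ← ZMod.fieldRange_castHom_eq_bot p] at hx
  obtain ⟨a, rfl⟩ := hx
  exact ⟨a.val, by simp⟩

namespace PowerSeries

variable {F : Type*} [Field F] (p : ℕ) [Fact p.Prime] [CharP F p]

theorem exists_natCast_eq_of_pow_eq_self {f : F⟦X⟧} (hf : f ^ p = f) : ∃ i : ℕ, (i : F⟦X⟧) = f := by
  obtain ⟨i, hi⟩ := _root_.exists_natCast_eq_of_pow_eq_self p (x := constantCoeff f)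
    (by rw [← map_pow, hf])
  refine ⟨i, (sub_eq_zero.mp (eq_zero_of_pow_eq_self (Fact.out : p.Prime).two_le ?_ ?_)).symm⟩
  · have hip : (i : F⟦X⟧) ^ p = i := by rw [← frobenius_def, map_natCast]
    rw [sub_pow_char, hf, hip]
  · rw [map_sub, map_natCast, hi, sub_self]

theorem exists_eq_natCast_mul_X_pow {N : ℕ} {f : F⟦X⟧} (hf : f ^ p = X ^ ((p - 1) * N) * f) :
    ∃ i : ℕ, f = (i : F⟦X⟧) * X ^ N := by
  rcases eq_or_ne f 0 with rfl | hf0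
  · exact ⟨0, by simp⟩
  have hp := (Fact.out : p.Prime).two_le
  have horder : f.order.toNat = N := by
    have h := congrArg order hf
    rw [order_pow, order_mul, order_X_pow, ← coe_toNat_order hf0, nsmul_eq_mul] at h
    have h' : p * f.order.toNat = (p - 1) * N + f.order.toNat := by exact_mod_cast h
    have : (p - 1) * f.order.toNat = (p - 1) * N := by
      zify [show 1 ≤ p by omega] at h' ⊢; linarith
    exact Nat.eq_of_mul_eq_mul_left (by omega) this
  have hunit : f.divXPowOrder ^ p = f.divXPowOrder := by
    simpa [divXPowOrder_pow, divXPowOrder_mul, divXPowOrder_X] using congrArg divXPowOrder hf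
  obtain ⟨i, hi⟩ := exists_natCast_eq_of_pow_eq_self p hunit
  refine ⟨i, ?_⟩
  rw [← X_pow_order_mul_divXPowOrder (f := f), horder, ← hi, mul_comm]

end PowerSeries

section Devissage

variable {A : Type*} [CommRing A] (φ : A →+* A) (d q : A) (p : ℕ)

theorem map_sub_mul_intCast_mul_add_pow_mul (c : ℤ) (m : ℕ) (y : A) :
    φ (c * q + (p : A) ^ m * y) - d * (c * q + (p : A) ^ m * y) =
      c * (φ q - d * q) + (p : A) ^ m * (φ y - d * y) := by
  simp only [map_add, map_mul, map_intCast, map_pow, map_natCast]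
  ring

variable {d q p}

theorem pow_dvd_map_sub_mul_of_dvd_sub {n m : ℕ} (hq : (p : A) ^ n ∣ φ q - d * q) (hmn : m ≤ n)
    {x : A} {c : ℤ} (hx : (p : A) ^ m ∣ x - c * q) : (p : A) ^ m ∣ φ x - d * x := by
  obtain ⟨y, hy⟩ := hx
  rw [show x = c * q + (p : A) ^ m * y by rw [← hy]; ring,
    map_sub_mul_intCast_mul_add_pow_mul]
  exact dvd_add (((pow_dvd_pow _ hmn).trans hq).mul_left _) (dvd_mul_right _ _)

theorem exists_pow_dvd_sub_intCast_mul [IsDomain A] (hp : (p : A) ≠ 0)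
    (hbase : ∀ x, (p : A) ∣ φ x - d * x → ∃ c : ℤ, (p : A) ∣ x - c * q) {n : ℕ}
    (hq : (p : A) ^ n ∣ φ q - d * q) {m : ℕ} (hmn : m ≤ n) {x : A}
    (hx : (p : A) ^ m ∣ φ x - d * x) : ∃ c : ℤ, (p : A) ^ m ∣ x - c * q := by
  induction m with
  | zero => exact ⟨0, by simp⟩
  | succ m ih =>
    obtain ⟨c, y, hy⟩ := ih (by omega) ((pow_dvd_pow _ m.le_succ).trans hx)
    have hxy : x = c * q + (p : A) ^ m * y := by rw [← hy]; ring
    have hy' : (p : A) ∣ φ y - d * y := by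
      have h := dvd_sub hx (((pow_dvd_pow _ hmn).trans hq).mul_left (c : A))
      rwa [hxy, map_sub_mul_intCast_mul_add_pow_mul, add_sub_cancel_left, pow_succ,
        mul_dvd_mul_iff_left (pow_ne_zero m hp)] at h
    obtain ⟨c', z, hz⟩ := hbase y hy'
    refine ⟨c + (p : ℤ) ^ m * c', z, ?_⟩
    rw [hxy, pow_succ]
    push_cast
    linear_combination (p : A) ^ m * hz

theorem pow_dvd_map_sub_mul_iff [IsDomain A] (hp : (p : A) ≠ 0)
    (hbase : ∀ x, (p : A) ∣ φ x - d * x → ∃ c : ℤ, (p : A) ∣ x - c * q) {n : ℕ}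
    (hq : (p : A) ^ n ∣ φ q - d * q) {m : ℕ} (hmn : m ≤ n) (x : A) :
    (p : A) ^ m ∣ φ x - d * x ↔ ∃ c : ℤ, (p : A) ^ m ∣ x - c * q :=
  ⟨exists_pow_dvd_sub_intCast_mul φ hp hbase hq hmn,
    fun ⟨_, hx⟩ ↦ pow_dvd_map_sub_mul_of_dvd_sub φ hq hmn hx⟩

end Devissage

theorem addOrderOf_mk_span_pow {A : Type*} [CommRing A] [IsDomain A] {p : ℕ} [Fact p.Prime]
    (hp : (p : A) ≠ 0) {q : A} (hq : ¬(p : A) ∣ q) (m : ℕ) :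
    addOrderOf (Ideal.Quotient.mk (Ideal.span {(p : A) ^ m}) q) = p ^ m := by
  have hsmul (j : ℕ) :
      j • Ideal.Quotient.mk (Ideal.span {(p : A) ^ m}) q = 0 ↔ (p : A) ^ m ∣ j * q := by
    rw [nsmul_eq_mul, ← map_natCast (Ideal.Quotient.mk _), ← map_mul,
      Ideal.Quotient.eq_zero_iff_mem, Ideal.mem_span_singleton]
  cases m with
  | zero => simp [Ideal.Quotient.eq_zero_iff_mem]
  | succ m =>
    refine addOrderOf_eq_prime_pow ?_ ?_
    · rw [hsmul, Nat.cast_pow, pow_succ, mul_dvd_mul_iff_left (pow_ne_zero m hp)]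
      exact hq
    · rw [hsmul, Nat.cast_pow]
      exact dvd_mul_right _ _

theorem geom_sum_pow_mul_sub_one {R : Type*} [CommRing R] (a : R) (n N : ℕ) :
    (∑ i ∈ Finset.range n, a ^ (i * N)) * (a ^ N - 1) = a ^ (n * N) - 1 := by
  simp_rw [mul_comm _ N, pow_mul]
  exact geom_sum_mul _ n

namespace WittVector

section CommRing

variable {p : ℕ} [Fact p.Prime] {k : Type*} [CommRing k] [CharP k p]

local notation "π" => PowerSeries.map (WittVector.constantCoeff : WittVector p k →+* k)

theorem map_constantCoeff_eq_zero_iff [PerfectRing k p] {f : (WittVector p k)⟦X⟧} :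
    π f = 0 ↔ (p : (WittVector p k)⟦X⟧) ∣ f := by
  rw [map_eq_zero_iff_C_dvd ker_constantCoeff, map_natCast]

theorem map_constantCoeff_one_add_X_pow_sub_one (e : ℕ) :
    π ((1 + X) ^ p ^ e - 1 : (WittVector p k)⟦X⟧) = X ^ p ^ e := by
  rw [map_sub, map_pow, map_add, map_one, map_X, add_pow_char_pow, one_pow, add_sub_cancel_left]

theorem map_constantCoeff_geom_sum [IsDomain k] (e : ℕ) :
    π (∑ i ∈ Finset.range p, (1 + X) ^ (i * p ^ e) : (WittVector p k)⟦X⟧) =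
      X ^ ((p - 1) * p ^ e) := by
  refine mul_right_cancel₀ (pow_ne_zero (p ^ e) X_ne_zero) ?_
  calc _ = π ((∑ i ∈ Finset.range p, (1 + X) ^ (i * p ^ e)) * ((1 + X) ^ p ^ e - 1)) := by
        rw [map_mul, map_constantCoeff_one_add_X_pow_sub_one]
    _ = X ^ p ^ (e + 1) := by
        rw [geom_sum_pow_mul_sub_one, ← pow_succ', map_constantCoeff_one_add_X_pow_sub_one]
    _ = _ := by
        rw [← pow_add, pow_succ', ← add_one_mul, Nat.sub_add_cancel (Fact.out : p.Prime).one_le]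

variable (φ : (WittVector p k)⟦X⟧ →+* (WittVector p k)⟦X⟧) (hφu : φ X = X ^ p)
  (hφC : ∀ a : WittVector p k, φ (C a) = C (frobenius a))
include hφu hφC

theorem map_constantCoeff_comp_eq_frobenius_comp :
    (π).comp φ = (_root_.frobenius k⟦X⟧ p).comp π :=
  ringHom_ext_of_X_dvd (fun a ↦ by simp [hφC, coeff_frobenius_charP, frobenius_def])
    (by simp [hφu, frobenius_def])
    (by
      rw [RingHom.comp_apply, hφu, map_pow, map_X]
      exact dvd_pow_self X (Fact.out : p.Prime).ne_zero)

theorem natCast_dvd_map_sub_pow [PerfectRing k p] (f : (WittVector p k)⟦X⟧) :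
    (p : (WittVector p k)⟦X⟧) ∣ φ f - f ^ p := by
  rw [← map_constantCoeff_eq_zero_iff, map_sub, ← RingHom.comp_apply,
    map_constantCoeff_comp_eq_frobenius_comp φ hφu hφC, RingHom.comp_apply, frobenius_def,
    map_pow, sub_self]

theorem pow_succ_dvd_map_sub_geom_sum_mul [PerfectRing k p] (a : (WittVector p k)⟦X⟧) (e : ℕ) :
    (p : (WittVector p k)⟦X⟧) ^ (e + 1) ∣
      φ (a ^ p ^ e - 1) - (∑ i ∈ Finset.range p, a ^ (i * p ^ e)) * (a ^ p ^ e - 1) := by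
  rw [geom_sum_pow_mul_sub_one, map_sub, map_pow, map_one, sub_sub_sub_cancel_right, pow_mul]
  exact dvd_sub_pow_of_dvd_sub (natCast_dvd_map_sub_pow φ hφu hφC a) e

end CommRing

section Field

variable {p : ℕ} [Fact p.Prime] {k : Type*} [Field k] [CharP k p] [PerfectRing k p]
  (φ : (WittVector p k)⟦X⟧ →+* (WittVector p k)⟦X⟧) (hφu : φ X = X ^ p)
  (hφC : ∀ a : WittVector p k, φ (C a) = C (frobenius a))
include hφu hφC

theorem exists_natCast_dvd_sub_mul_of_dvd (e : ℕ) {x : (WittVector p k)⟦X⟧}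
    (hx : (p : (WittVector p k)⟦X⟧) ∣ φ x - (∑ i ∈ Finset.range p, (1 + X) ^ (i * p ^ e)) * x) :
    ∃ c : ℕ, (p : (WittVector p k)⟦X⟧) ∣ x - (c : (WittVector p k)⟦X⟧) * ((1 + X) ^ p ^ e - 1) := by
  have h := map_constantCoeff_eq_zero_iff.mpr hx
  rw [map_sub, ← RingHom.comp_apply, map_constantCoeff_comp_eq_frobenius_comp φ hφu hφC,
    RingHom.comp_apply, frobenius_def, map_mul, map_constantCoeff_geom_sum, sub_eq_zero] at h
  obtain ⟨c, hc⟩ := PowerSeries.exists_eq_natCast_mul_X_pow p h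
  refine ⟨c, map_constantCoeff_eq_zero_iff.mp ?_⟩
  rw [map_sub, map_mul, map_natCast, map_constantCoeff_one_add_X_pow_sub_one, hc, sub_self]

end Field

end WittVector

theorem stmt14_general (p : ℕ) [Fact p.Prime] (k : Type*) [Field k] [IsAlgClosed k] [CharP k p]
    (φ : PowerSeries (WittVector p k) →+* PowerSeries (WittVector p k))
    (hφu : φ PowerSeries.X = PowerSeries.X ^ p)
    (hφC : ∀ a : WittVector p k,
      φ (PowerSeries.C a) = PowerSeries.C (WittVector.frobenius a))
    (n : ℕ)
    (q d : PowerSeries (WittVector p k))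
    (hq : q = (1 + PowerSeries.X) ^ p ^ (n - 1) - 1)
    (hd : d = ∑ i ∈ Finset.range p, (1 + PowerSeries.X) ^ (i * p ^ (n - 1))) :
    ∀ m : ℕ, 1 ≤ m → m ≤ n →
      (∀ x : PowerSeries (WittVector p k),
        φ x - d * x ∈ Ideal.span {((p : PowerSeries (WittVector p k)) ^ m)} ↔
        ∃ c : ℤ, x - (c : PowerSeries (WittVector p k)) * q ∈
          Ideal.span {((p : PowerSeries (WittVector p k)) ^ m)}) ∧
      addOrderOf (Ideal.Quotient.mk
        (Ideal.span {((p : PowerSeries (WittVector p k)) ^ m)}) q) = p ^ m := by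
  intro m hm hmn
  obtain ⟨e, rfl⟩ : ∃ e, n = e + 1 := ⟨n - 1, by omega⟩
  rw [Nat.add_sub_cancel] at hq hd
  subst hq hd
  have hp : (p : PowerSeries (WittVector p k)) ≠ 0 := by
    rw [← map_natCast PowerSeries.C]
    exact (map_ne_zero_iff _ PowerSeries.C_injective).mpr (WittVector.p_nonzero p k)
  have hq : ¬(p : PowerSeries (WittVector p k)) ∣ (1 + PowerSeries.X) ^ p ^ e - 1 := by
    rw [← WittVector.map_constantCoeff_eq_zero_iff,
      WittVector.map_constantCoeff_one_add_X_pow_sub_one]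
    exact pow_ne_zero _ PowerSeries.X_ne_zero
  refine ⟨fun x ↦ ?_, addOrderOf_mk_span_pow hp hq m⟩
  simp only [Ideal.mem_span_singleton]
  refine pow_dvd_map_sub_mul_iff φ hp (fun y hy ↦ ?_)
    (WittVector.pow_succ_dvd_map_sub_geom_sum_mul φ hφu hφC _ e) hmn x
  obtain ⟨c, hc⟩ := WittVector.exists_natCast_dvd_sub_mul_of_dvd φ hφu hφC e hy
  exact ⟨c, mod_cast hc⟩

/-- **Lemma 6.7.** Let `k` be an algebraically closed field of characteristic `p`,
`𝔖 = W(k)⟦u⟧` with Frobenius lift `φ`, and for `n ≥ 1` set `q = (1+u)^{p^{n-1}} - 1` and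
`d = Σ_{i=0}^{p-1} (1+u)^{i·p^{n-1}}` (so `d·q = (1+u)^{p^n} - 1`).  For every `1 ≤ m ≤ n`, the
kernel of `x ↦ φ(x) - d·x` on `𝔖/p^m` is exactly the cyclic subgroup generated by the class of
`q`, and this class has additive order `p^m` (so the kernel is `ℤ/p^m · q`). -/
theorem stmt14 (p : ℕ) [Fact p.Prime] (k : Type*) [Field k] [IsAlgClosed k] [CharP k p]
    (φ : PowerSeries (WittVector p k) →+* PowerSeries (WittVector p k))
    (hφu : φ PowerSeries.X = PowerSeries.X ^ p)
    (hφC : ∀ a : WittVector p k,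
      φ (PowerSeries.C a) = PowerSeries.C (WittVector.frobenius a))
    (n : ℕ) (hn : 1 ≤ n)
    (q d : PowerSeries (WittVector p k))
    (hq : q = (1 + PowerSeries.X) ^ p ^ (n - 1) - 1)
    (hd : d = ∑ i ∈ Finset.range p, (1 + PowerSeries.X) ^ (i * p ^ (n - 1))) :
    ∀ m : ℕ, 1 ≤ m → m ≤ n →
      (∀ x : PowerSeries (WittVector p k),
        φ x - d * x ∈ Ideal.span {((p : PowerSeries (WittVector p k)) ^ m)} ↔
        ∃ c : ℤ, x - (c : PowerSeries (WittVector p k)) * q ∈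
          Ideal.span {((p : PowerSeries (WittVector p k)) ^ m)}) ∧
      addOrderOf (Ideal.Quotient.mk
        (Ideal.span {((p : PowerSeries (WittVector p k)) ^ m)}) q) = p ^ m :=
  stmt14_general p k φ hφu hφC n q d hq hd
end

section
/- Let k be an algebraically closed field of characteristic p and n ≥ 1; set e := p^{n−1}·(p−1). If f ∈ k⟦u⟧ satisfies f^p = u^e·f, then f = c·u^{p^{n−1}} for some c ∈ k with c^p = c (so c lies in the prime subfield 𝔽_p of k). In particular, the set of solutions of f^p = u^e·f in k⟦u⟧ is the 𝔽_p-line 𝔽_p·u^{p^{n−1}}. -/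
/-!
Comparing orders in `f ^ p = X ^ (q * (p - 1)) * f`, with `q = p ^ (n - 1)`, gives
`p * ord f = q * (p - 1) + ord f`, so a nonzero solution has order exactly `q` and
`f = X ^ q * g`. Cancelling `X ^ (q * p)` leaves `g ^ p = g`. Since Frobenius is additive,
`h = g - C (g 0)` also satisfies `h ^ p = h`, and `h * (h ^ (p - 1) - 1) = 0` with the second
factor having constant coefficient `-1`; hence `h = 0` and `g` is a constant fixed by Frobenius.
-/

namespace PowerSeries

variable {R : Type*} [CommRing R] [IsDomain R]

theorem eq_zero_of_pow_eq_self_of_constantCoeff_eq_zero {φ : R⟦X⟧} {m : ℕ} (hm : 2 ≤ m)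
    (hφ : φ ^ m = φ) (h0 : constantCoeff φ = 0) : φ = 0 := by
  have hfactor : φ * (φ ^ (m - 1) - 1) = 0 := by
    rw [mul_sub, mul_one, ← pow_succ', Nat.sub_add_cancel (by omega), hφ, sub_self]
  refine (mul_eq_zero.mp hfactor).resolve_right fun h ↦ ?_
  have := congrArg constantCoeff h
  simp [h0, zero_pow (by omega : m - 1 ≠ 0)] at this

theorem exists_eq_C_of_pow_char_eq_self (p : ℕ) [Fact p.Prime] [CharP R p] {g : R⟦X⟧}
    (hg : g ^ p = g) : ∃ c : R, c ^ p = c ∧ g = C c := by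
  have : CharP R⟦X⟧ p := charP_of_injective_ringHom C_injective p
  set c := constantCoeff g
  have hc : c ^ p = c := by rw [← map_pow, hg]
  refine ⟨c, hc, sub_eq_zero.mp ?_⟩
  refine eq_zero_of_pow_eq_self_of_constantCoeff_eq_zero (Fact.out : p.Prime).two_le ?_ ?_
  · rw [sub_pow_char, hg, ← map_pow, hc]
  · simp [c]

theorem order_eq_of_pow_eq_X_pow_mul {f : R⟦X⟧} (hf0 : f ≠ 0) {m q : ℕ} (hm : 2 ≤ m)
    (hf : f ^ m = X ^ (q * (m - 1)) * f) : f.order = q := by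
  obtain ⟨d, hd⟩ := ENat.ne_top_iff_exists.mp (order_eq_top.not.mpr hf0)
  have horder := congrArg order hf
  rw [order_pow, order_mul, order_X_pow, ← hd, nsmul_eq_mul] at horder
  have hd' : m * d = q * (m - 1) + d := by exact_mod_cast horder
  rw [← hd, Nat.cast_inj]
  refine Nat.eq_of_mul_eq_mul_left (by omega : 0 < m - 1) ?_
  rw [Nat.sub_mul, one_mul, hd', mul_comm]
  omega

end PowerSeries

open PowerSeries

theorem stmt15_general (p : ℕ) [Fact p.Prime] (k : Type*) [Field k] [CharP k p]
    (n : ℕ) (f : PowerSeries k)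
    (hf : f ^ p = (PowerSeries.X : PowerSeries k) ^ (p ^ (n - 1) * (p - 1)) * f) :
    ∃ c : k, c ^ p = c ∧ f = PowerSeries.C c * (PowerSeries.X : PowerSeries k) ^ p ^ (n - 1) := by
  have hp : 2 ≤ p := (Fact.out : p.Prime).two_le
  set q := p ^ (n - 1)
  rcases eq_or_ne f 0 with rfl | hf0
  · exact ⟨0, zero_pow (by omega), by simp⟩
  have hord := order_eq_of_pow_eq_X_pow_mul hf0 hp hf
  obtain ⟨g, rfl⟩ : X ^ q ∣ f := by simpa [hord] using X_pow_order_dvd (φ := f)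
  have hg : g ^ p = g := by
    refine mul_left_cancel₀ (pow_ne_zero (q * p) X_ne_zero) ?_
    calc X ^ (q * p) * g ^ p = (X ^ q * g) ^ p := by rw [mul_pow, pow_mul]
      _ = X ^ (q * (p - 1) + q) * g := by rw [hf, pow_add, mul_assoc]
      _ = X ^ (q * p) * g := by rw [← mul_add_one, Nat.sub_add_cancel (by omega)]
  obtain ⟨c, hc, rfl⟩ := exists_eq_C_of_pow_char_eq_self p hg
  exact ⟨c, hc, mul_comm _ _⟩

/-- The base case (`m = 1`) of Lemma 6.7: let `k` be an algebraically closed field of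
characteristic `p`, `n ≥ 1`, and `e = p^{n-1}(p-1)`.  If `f ∈ k⟦u⟧` satisfies `f^p = u^e · f`,
then `f = c · u^{p^{n-1}}` for some `c` in the prime field (`c^p = c`). -/
theorem stmt15 (p : ℕ) [Fact p.Prime] (k : Type*) [Field k] [IsAlgClosed k] [CharP k p]
    (n : ℕ) (hn : 1 ≤ n) (f : PowerSeries k)
    (hf : f ^ p = (PowerSeries.X : PowerSeries k) ^ (p ^ (n - 1) * (p - 1)) * f) :
    ∃ c : k, c ^ p = c ∧ f = PowerSeries.C c * (PowerSeries.X : PowerSeries k) ^ p ^ (n - 1) :=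
  stmt15_general p k n f hf
end

section
/- Let v' ∈ 𝔖 be a unit satisfying v' ≡ 1 modulo u (i.e. v' − 1 ∈ u·𝔖). Then there exists a unit v ∈ 𝔖 with v ≡ 1 modulo u such that v' = φ(v)·v^{−1}. (This is the 'simple exercise' used in the paper to normalize the generator of the Breuil–Kisin twist 𝔖{−1} so that φ(x) = d·x.) -/
/-!
A ring endomorphism `φ` of `R⟦X⟧` with `φ X = X ^ p` and `φ (C a) = C (F a)` sends `X ^ N * g`
into `X ^ (p * N) R⟦X⟧`, so it acts on coefficients by `coeff m (φ f) = F (coeff (m / p) f)` if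
`p ∣ m` and `0` otherwise. Hence, when `coeff 0 w = 1`, the degree `m` part of `w * v = φ v` reads
`v_m + ∑_{k ≥ 1} w_k v_{m-k} = [p ∣ m] F (v_{m/p})`, and for `m ≥ 1` it involves only `v_{m/p}`
with `m / p < m`: it can be solved for `v_m` by recursion, starting from `v_0 = 1`.
-/

open Finset

namespace PowerSeries

variable {R : Type*} [CommRing R] {p : ℕ} {φ : R⟦X⟧ →+* R⟦X⟧} {F : R →+* R}

theorem sub_one_mem_span_X_iff {f : R⟦X⟧} :
    f - 1 ∈ Ideal.span {(X : R⟦X⟧)} ↔ constantCoeff f = 1 := by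
  rw [Ideal.mem_span_singleton, X_dvd_iff, map_sub, map_one, sub_eq_zero]

theorem apply_coe_eq_eval₂ (hφX : φ X = X ^ p) (hφC : ∀ a, φ (C a) = C (F a))
    (q : Polynomial R) : φ q = q.eval₂ (C.comp F) (X ^ p) := by
  have : φ.comp Polynomial.coeToPowerSeries.ringHom = Polynomial.eval₂RingHom (C.comp F) (X ^ p) :=
    Polynomial.ringHom_ext (fun a => by simp [hφC]) (by simp [hφX])
  exact DFunLike.congr_fun this q

theorem coeff_apply_of_apply_X_eq_X_pow (hφX : φ X = X ^ p) (hφC : ∀ a, φ (C a) = C (F a))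
    (hp : 0 < p) (f : R⟦X⟧) (m : ℕ) :
    coeff m (φ f) = if p ∣ m then F (coeff (m / p) f) else 0 := by
  have hm : m < p * (m + 1) := by nlinarith
  conv_lhs => rw [eq_X_pow_mul_shift_add_trunc (m + 1) f, map_add, map_mul, map_pow, hφX,
    ← pow_mul, apply_coe_eq_eval₂ hφX hφC, eval₂_trunc_eq_sum_range, map_add,
    coeff_X_pow_mul', if_neg (not_le.mpr hm), zero_add, map_sum]
  simp only [RingHom.coe_comp, Function.comp_apply, ← pow_mul, coeff_C_mul_X_pow]
  split_ifs with hdvd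
  · obtain ⟨q, rfl⟩ := hdvd
    rw [sum_eq_single q (fun i _ hi => if_neg fun h => hi (Nat.eq_of_mul_eq_mul_left hp h).symm)
      (fun hq => absurd (mem_range.mpr (by nlinarith)) hq), if_pos rfl,
      Nat.mul_div_cancel_left q hp]
  · exact sum_eq_zero fun i _ => if_neg fun h => hdvd ⟨i, h⟩

noncomputable def frobeniusQuotientCoeff (hp : 1 < p) (F : R → R) (w : R⟦X⟧) : ℕ → R
  | 0 => 1
  | m + 1 =>
      (if p ∣ m + 1 then F (frobeniusQuotientCoeff hp F w ((m + 1) / p)) else 0)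
        - ∑ k ∈ range (m + 1), coeff (k + 1) w * frobeniusQuotientCoeff hp F w (m - k)
  decreasing_by
    · exact Nat.div_lt_self m.succ_pos hp
    · omega

theorem exists_mul_eq_apply_of_apply_X_eq_X_pow (hp : 1 < p) (hφX : φ X = X ^ p)
    (hφC : ∀ a, φ (C a) = C (F a)) {w : R⟦X⟧} (hw : constantCoeff w = 1) :
    ∃ v : R⟦X⟧, constantCoeff v = 1 ∧ w * v = φ v := by
  set a := frobeniusQuotientCoeff hp F w
  refine ⟨mk a, by simp [a, frobeniusQuotientCoeff], ext fun m => ?_⟩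
  rw [coeff_apply_of_apply_X_eq_X_pow hφX hφC (by omega), coeff_mul,
    Nat.sum_antidiagonal_eq_sum_range_succ (fun i j => coeff i w * coeff j (mk a))]
  rw [← coeff_zero_eq_constantCoeff_apply] at hw
  rcases m with _ | m
  · simp [a, frobeniusQuotientCoeff, hw]
  · rw [sum_range_succ', coeff_mk, coeff_mk, Nat.sub_zero, hw, one_mul]
    simp only [coeff_mk, Nat.add_sub_add_right]
    rw [show a (m + 1) = _ from frobeniusQuotientCoeff.eq_2 ..]
    ring

end PowerSeries

theorem stmt16_general (p : ℕ) [Fact p.Prime] (k : Type*) [Field k]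
    (φ : PowerSeries (WittVector p k) →+* PowerSeries (WittVector p k))
    (hφu : φ PowerSeries.X = PowerSeries.X ^ p)
    (hφC : ∀ a : WittVector p k,
      φ (PowerSeries.C a) = PowerSeries.C (WittVector.frobenius a))
    (v' : PowerSeries (WittVector p k))
    (hcong : v' - 1 ∈ Ideal.span {(PowerSeries.X : PowerSeries (WittVector p k))}) :
    ∃ v : PowerSeries (WittVector p k), IsUnit v ∧
      v - 1 ∈ Ideal.span {(PowerSeries.X : PowerSeries (WittVector p k))} ∧
      v' * v = φ v := by
  obtain ⟨v, hv, hφv⟩ := PowerSeries.exists_mul_eq_apply_of_apply_X_eq_X_pow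
    (Fact.out : p.Prime).one_lt hφu hφC (PowerSeries.sub_one_mem_span_X_iff.mp hcong)
  exact ⟨v, PowerSeries.isUnit_iff_constantCoeff.mpr (hv ▸ isUnit_one),
    PowerSeries.sub_one_mem_span_X_iff.mpr hv, hφv⟩

/-- The "simple exercise" used in Proposition 6.2: let `𝔖 = W(k)⟦u⟧` with Frobenius lift `φ`.
If `v' ∈ 𝔖ˣ` is a unit with `v' ≡ 1 (mod u)`, then there is a unit `v ∈ 𝔖ˣ` with `v ≡ 1 (mod u)`
such that `v' = φ(v)·v⁻¹`, i.e. `v' · v = φ(v)`. -/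
theorem stmt16 (p : ℕ) [Fact p.Prime] (k : Type*) [Field k] [CharP k p] [PerfectField k]
    (φ : PowerSeries (WittVector p k) →+* PowerSeries (WittVector p k))
    (hφu : φ PowerSeries.X = PowerSeries.X ^ p)
    (hφC : ∀ a : WittVector p k,
      φ (PowerSeries.C a) = PowerSeries.C (WittVector.frobenius a))
    (v' : PowerSeries (WittVector p k)) (hv' : IsUnit v')
    (hcong : v' - 1 ∈ Ideal.span {(PowerSeries.X : PowerSeries (WittVector p k))}) :
    ∃ v : PowerSeries (WittVector p k), IsUnit v ∧
      v - 1 ∈ Ideal.span {(PowerSeries.X : PowerSeries (WittVector p k))} ∧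
      v' * v = φ v :=
  stmt16_general p k φ hφu hφC v' hcong
end
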